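/- arXiv:2502.06642 — 10 statements merged into one kernel-verified Lean document; each statement's English description precedes it below -/
import Mathlib

section
/- Let T : H → H with Fix T ≠ ∅ and λ > 0. Then T is a λ-relaxation of a cutter if and only if T is a (λ/2)-relaxation of a quasi-nonexpansive operator. -/
open RealInnerProductSpace

/-- An operator `U` is a cutter if it has a fixed point and
`⟪z - U x, x - U x⟫ ≤ 0` for all `x` and fixed points `z` of `U`. -/
def IsCutter {H : Type*} [NormedAddCommGroup H] [InnerProductSpace ℝ H]
    (U : H → H) : Prop :=
  {x | U x = x}.Nonempty ∧ ∀ x z, U z = z → ⟪z - U x, x - U x⟫ ≤ 0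

/-- An operator `Q` is quasi-nonexpansive if it has a fixed point and
`‖Q x - z‖ ≤ ‖x - z‖` for all `x` and fixed points `z` of `Q`. -/
def IsQNE {H : Type*} [NormedAddCommGroup H] [InnerProductSpace ℝ H]
    (Q : H → H) : Prop :=
  {x | Q x = x}.Nonempty ∧ ∀ x z, Q z = z → ‖Q x - z‖ ≤ ‖x - z‖

private lemma key_relax {H : Type*} [NormedAddCommGroup H] [InnerProductSpace ℝ H]
    (x z a : H) : ‖x + (2:ℝ) • a - z‖ ≤ ‖x - z‖ ↔ ⟪z - (x + a), x - (x + a)⟫ ≤ 0 := by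
  have h1 : ‖x + (2:ℝ) • a - z‖ ^ 2 = ‖x - z‖ ^ 2 + 4 * ⟪x - z, a⟫ + 4 * ‖a‖ ^ 2 := by
    have e : x + (2:ℝ) • a - z = (x - z) + (2:ℝ) • a := by abel
    rw [e, norm_add_sq_real, real_inner_smul_right, norm_smul]
    simp; ring
  have h2 : ⟪z - (x + a), x - (x + a)⟫ = ⟪x - z, a⟫ + ‖a‖ ^ 2 := by
    have e1 : z - (x + a) = (z - x) - a := by abel
    have e2 : x - (x + a) = -a := by abel
    rw [e1, e2, inner_sub_left, inner_neg_right, inner_neg_right,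
      real_inner_self_eq_norm_sq, ← inner_neg_left]
    have e3 : -(z - x) = x - z := by abel
    rw [e3]; ring
  rw [← pow_le_pow_iff_left₀ (norm_nonneg _) (norm_nonneg _) two_ne_zero]
  constructor <;> intro h <;> nlinarith [h1, h2]

theorem stmt_2 {H : Type*} [NormedAddCommGroup H] [InnerProductSpace ℝ H]
    (T : H → H) (hfix : {x | T x = x}.Nonempty) (lam : ℝ) (hlam : 0 < lam) :
    (∃ U : H → H, IsCutter U ∧ ∀ x, T x = x + lam • (U x - x)) ↔
      (∃ Q : H → H, IsQNE Q ∧ ∀ x, T x = x + (lam / 2) • (Q x - x)) := by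
  constructor
  · rintro ⟨U, ⟨⟨z₀, hz₀⟩, hcut⟩, hT⟩
    refine ⟨fun x => x + (2:ℝ) • (U x - x), ⟨⟨z₀, by simp [Set.mem_setOf_eq.mp hz₀]⟩, ?_⟩, ?_⟩
    · intro x z hz
      have hUz : U z = z := by
        have h' : z + (2:ℝ) • (U z - z) = z := hz
        have h0 : (2:ℝ) • (U z - z) = 0 := by linear_combination (norm := abel) h'
        have := (smul_eq_zero.mp h0).resolve_left (by norm_num)
        exact sub_eq_zero.mp this
      have := hcut x z hUz
      have h := (key_relax x z (U x - x)).mpr (by simpa using this)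
      simpa using h
    · intro x
      rw [hT x, add_sub_cancel_left]
      module
  · rintro ⟨Q, ⟨⟨z₀, hz₀⟩, hqne⟩, hT⟩
    refine ⟨fun x => x + (2⁻¹:ℝ) • (Q x - x), ⟨⟨z₀, by simp [Set.mem_setOf_eq.mp hz₀]⟩, ?_⟩, ?_⟩
    · intro x z hz
      have hQz : Q z = z := by
        have h' : z + (2⁻¹:ℝ) • (Q z - z) = z := hz
        have : (2⁻¹:ℝ) • (Q z - z) = 0 := by linear_combination (norm := abel) h'
        have := (smul_eq_zero.mp this).resolve_left (by norm_num)
        exact sub_eq_zero.mp this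
      have hn := hqne x z hQz
      have e : x + (2:ℝ) • ((2⁻¹:ℝ) • (Q x - x)) = Q x := by
        rw [smul_smul]; norm_num
      have h := (key_relax x z ((2⁻¹:ℝ) • (Q x - x))).mp (by rw [e]; exact hn)
      simpa using h
    · intro x
      rw [hT x, add_sub_cancel_left]
      module
end

section
/- Let T, U : H → H be λ- and μ-relaxed cutters, respectively, with λ, μ > 0, λμ < 4, and Fix T ∩ Fix U ≠ ∅. Let ν := 4(λ + μ − λμ)/(4 − λμ). Then for every x ∈ H and z ∈ Fix T ∩ Fix U, one has ⟨z − x, UT(x) − x⟩ − (1/ν)‖UT(x) − x‖² ≥ ‖√(1/λ − 1/ν)(T(x) − x) ± √(1/μ − 1/ν)(UT(x) − T(x))‖² ≥ 0, where the sign is '+' when max{λ, μ} ≥ 2 and '−' when max{λ, μ} < 2. -/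
set_option maxHeartbeats 1000000

open RealInnerProductSpace

/-- `T` is a `lam`-relaxed cutter: it has a fixed point and
`lam * ⟪z - x, T x - x⟫ ≥ ‖T x - x‖²` for all `x` and fixed points `z`. -/
def IsRelaxedCutter {H : Type*} [NormedAddCommGroup H] [InnerProductSpace ℝ H]
    (T : H → H) (lam : ℝ) : Prop :=
  {x | T x = x}.Nonempty ∧
    ∀ x z, T z = z → lam * ⟪z - x, T x - x⟫ ≥ ‖T x - x‖ ^ 2

theorem stmt_4 {H : Type*} [NormedAddCommGroup H] [InnerProductSpace ℝ H]
    (T U : H → H) (lam mu : ℝ) (hlam : 0 < lam) (hmu : 0 < mu)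
    (hT : IsRelaxedCutter T lam) (hU : IsRelaxedCutter U mu)
    (h4 : lam * mu < 4) (hfix : ({x | T x = x} ∩ {x | U x = x}).Nonempty)
    (nu : ℝ) (hnu : nu = 4 * (lam + mu - lam * mu) / (4 - lam * mu)) :
    ∀ x z, T z = z → U z = z →
      (2 ≤ max lam mu →
        ⟪z - x, U (T x) - x⟫ - (1 / nu) * ‖U (T x) - x‖ ^ 2 ≥
          ‖Real.sqrt (1 / lam - 1 / nu) • (T x - x) +
            Real.sqrt (1 / mu - 1 / nu) • (U (T x) - T x)‖ ^ 2 ∧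
        (0 : ℝ) ≤ ‖Real.sqrt (1 / lam - 1 / nu) • (T x - x) +
            Real.sqrt (1 / mu - 1 / nu) • (U (T x) - T x)‖ ^ 2) ∧
      (max lam mu < 2 →
        ⟪z - x, U (T x) - x⟫ - (1 / nu) * ‖U (T x) - x‖ ^ 2 ≥
          ‖Real.sqrt (1 / lam - 1 / nu) • (T x - x) -
            Real.sqrt (1 / mu - 1 / nu) • (U (T x) - T x)‖ ^ 2 ∧
        (0 : ℝ) ≤ ‖Real.sqrt (1 / lam - 1 / nu) • (T x - x) -
            Real.sqrt (1 / mu - 1 / nu) • (U (T x) - T x)‖ ^ 2) := by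
  intro x z hTz hUz
  have h4' : (0:ℝ) < 4 - lam * mu := by linarith
  have hs : 0 < lam + mu - lam * mu := by
    nlinarith [sq_nonneg (lam - mu), mul_pos hlam hmu, sq_nonneg (lam * mu - 4)]
  have hnu0 : 0 < nu := by rw [hnu]; positivity
  have hlamnu : lam ≤ nu := by
    have : nu - lam = mu * (2 - lam) ^ 2 / (4 - lam * mu) := by
      rw [hnu]; field_simp; ring
    nlinarith [sq_nonneg (2 - lam), mul_nonneg hmu.le (sq_nonneg (2 - lam)),
      div_nonneg (mul_nonneg hmu.le (sq_nonneg (2 - lam))) h4'.le]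
  have hmunu : mu ≤ nu := by
    have : nu - mu = lam * (2 - mu) ^ 2 / (4 - lam * mu) := by
      rw [hnu]; field_simp; ring
    nlinarith [div_nonneg (mul_nonneg hlam.le (sq_nonneg (2 - mu))) h4'.le]
  have hα : 0 ≤ 1 / lam - 1 / nu := by
    have := one_div_le_one_div_of_le hlam hlamnu
    linarith
  have hβ : 0 ≤ 1 / mu - 1 / nu := by
    have := one_div_le_one_div_of_le hmu hmunu
    linarith
  set a := T x - x with ha
  set b := U (T x) - T x with hb
  set r := Real.sqrt (1 / lam - 1 / nu) with hr
  set t := Real.sqrt (1 / mu - 1 / nu) with ht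
  have hr2 : r ^ 2 = 1 / lam - 1 / nu := Real.sq_sqrt hα
  have ht2 : t ^ 2 = 1 / mu - 1 / nu := Real.sq_sqrt hβ
  have hαβ : (1 / lam - 1 / nu) * (1 / mu - 1 / nu)
      = (((2 - lam) * (2 - mu)) / (4 * (lam + mu - lam * mu))) ^ 2 := by
    rw [hnu]; field_simp; ring
  have hrt : r * t = |((2 - lam) * (2 - mu)) / (4 * (lam + mu - lam * mu))| := by
    rw [hr, ht, ← Real.sqrt_mul hα, hαβ, Real.sqrt_sq_eq_abs]
  -- cutter inequalities
  have hcutT := hT.2 x z hTz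
  have hcutU := hU.2 (T x) z hUz
  have hzT : (z - T x) = (z - x) - a := by rw [ha]; abel
  have hQ : mu * (⟪z - x, b⟫ - ⟪a, b⟫) ≥ ‖b‖ ^ 2 := by
    rw [← inner_sub_left, ← hzT]; exact hcutU
  have hP' : (1 / lam) * ‖a‖ ^ 2 ≤ ⟪z - x, a⟫ := by
    rw [div_mul_eq_mul_div, div_le_iff₀ hlam] at *
    nlinarith [hcutT]
  have hQ' : (1 / mu) * ‖b‖ ^ 2 + ⟪a, b⟫ ≤ ⟪z - x, b⟫ := by
    have : (1 / mu) * ‖b‖ ^ 2 ≤ ⟪z - x, b⟫ - ⟪a, b⟫ := by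
      rw [div_mul_eq_mul_div, div_le_iff₀ hmu]; nlinarith [hQ]
    linarith
  have hab : U (T x) - x = a + b := by rw [ha, hb]; abel
  have hinner : ⟪z - x, U (T x) - x⟫ = ⟪z - x, a⟫ + ⟪z - x, b⟫ := by
    rw [hab, inner_add_right]
  have hnorm : ‖U (T x) - x‖ ^ 2 = ‖a‖ ^ 2 + 2 * ⟪a, b⟫ + ‖b‖ ^ 2 := by
    rw [hab, @norm_add_sq_real]
  have hplus : ‖r • a + t • b‖ ^ 2
      = r ^ 2 * ‖a‖ ^ 2 + 2 * (r * t) * ⟪a, b⟫ + t ^ 2 * ‖b‖ ^ 2 := by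
    rw [@norm_add_sq_real, norm_smul, norm_smul, real_inner_smul_left,
      real_inner_smul_right]
    simp [Real.norm_eq_abs, mul_pow, sq_abs]
    ring
  have hminus : ‖r • a - t • b‖ ^ 2
      = r ^ 2 * ‖a‖ ^ 2 - 2 * (r * t) * ⟪a, b⟫ + t ^ 2 * ‖b‖ ^ 2 := by
    rw [@norm_sub_sq_real, norm_smul, norm_smul, real_inner_smul_left,
      real_inner_smul_right]
    simp [Real.norm_eq_abs, mul_pow, sq_abs]
    ring
  constructor
  · intro hmax
    refine ⟨?_, sq_nonneg _⟩
    have hsign : (2 - lam) * (2 - mu) ≤ 0 := by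
      rcases le_total lam mu with h | h
      · rw [max_eq_right h] at hmax
        have : lam < 2 := by nlinarith
        nlinarith
      · rw [max_eq_left h] at hmax
        have : mu < 2 := by nlinarith
        nlinarith
    have hkey : 2 * (r * t) = 1 - 2 / nu := by
      rw [hrt, abs_of_nonpos (div_nonpos_of_nonpos_of_nonneg hsign (by linarith)),
        hnu]
      field_simp; ring
    rw [hinner, hnorm, hplus, hr2, ht2, hkey]
    have h := add_le_add hP' hQ'
    ring_nf
    ring_nf at h
    linarith
  · intro hmax
    refine ⟨?_, sq_nonneg _⟩
    have hl2 : lam < 2 := lt_of_le_of_lt (le_max_left _ _) hmax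
    have hm2 : mu < 2 := lt_of_le_of_lt (le_max_right _ _) hmax
    have hsign : 0 ≤ (2 - lam) * (2 - mu) := by nlinarith
    have hkey : 2 * (r * t) = 2 / nu - 1 := by
      rw [hrt, abs_of_nonneg (div_nonneg hsign (by linarith)), hnu]
      field_simp; ring
    rw [hinner, hnorm, hminus, hr2, ht2, hkey]
    have h := add_le_add hP' hQ'
    ring_nf
    ring_nf at h
    linarith
end

section
/- Let T, U : H → H be λ- and μ-relaxed cutters, respectively, with λ, μ > 0, λμ < 4, and Fix T ∩ Fix U ≠ ∅. Then the composition UT is a ν-relaxed cutter, where ν := 4(λ + μ − λμ)/(4 − λμ), and Fix(UT) = Fix T ∩ Fix U. -/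
open RealInnerProductSpace

lemma key_ineq (lam mu a b t P Q : ℝ) (hlam : 0 < lam) (hmu : 0 < mu)
    (h4 : lam * mu < 4) (ht1 : t ≤ a * b) (ht2 : -(a * b) ≤ t)
    (hA : lam * P ≥ a ^ 2) (hB : mu * (Q - t) ≥ b ^ 2) :
    4 * (lam + mu - lam * mu) / (4 - lam * mu) * (P + Q) ≥ a ^ 2 + 2 * t + b ^ 2 := by
  have hsp : 0 < lam + mu - lam * mu := by
    nlinarith [sq_nonneg (lam - mu), mul_pos hlam hmu]
  have hd : 0 < 4 - lam * mu := by linarith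
  rw [ge_iff_le, div_mul_eq_mul_div, le_div_iff₀ hd]
  have h1 : 0 ≤ 4 * mu * (lam + mu - lam * mu) * (lam * P - a ^ 2) :=
    mul_nonneg (by positivity) (by linarith)
  have h2 : 0 ≤ 4 * lam * (lam + mu - lam * mu) * (mu * (Q - t) - b ^ 2) :=
    mul_nonneg (by positivity) (by linarith)
  have hbr : 0 ≤ (mu * (lam - 2) * a) ^ 2 + (lam * (mu - 2) * b) ^ 2
      - 2 * (mu * (lam - 2)) * (lam * (mu - 2)) * t := by
    rcases le_total 0 ((mu * (lam - 2)) * (lam * (mu - 2))) with h | h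
    · nlinarith [sq_nonneg (mu * (lam - 2) * a - lam * (mu - 2) * b),
        mul_nonneg h (by linarith : (0:ℝ) ≤ a * b - t)]
    · nlinarith [sq_nonneg (mu * (lam - 2) * a + lam * (mu - 2) * b),
        mul_nonneg (by linarith : (0:ℝ) ≤ -((mu * (lam - 2)) * (lam * (mu - 2))))
          (by linarith : (0:ℝ) ≤ a * b + t)]
  nlinarith [mul_pos hlam hmu, h1, h2, hbr]

theorem stmt_5 {H : Type*} [NormedAddCommGroup H] [InnerProductSpace ℝ H]
    (T U : H → H) (lam mu : ℝ) (hlam : 0 < lam) (hmu : 0 < mu)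
    (hT : IsRelaxedCutter T lam) (hU : IsRelaxedCutter U mu)
    (h4 : lam * mu < 4) (hfix : ({x | T x = x} ∩ {x | U x = x}).Nonempty)
    (nu : ℝ) (hnu : nu = 4 * (lam + mu - lam * mu) / (4 - lam * mu)) :
    IsRelaxedCutter (U ∘ T) nu ∧
      {x | (U ∘ T) x = x} = {x | T x = x} ∩ {x | U x = x} := by
  obtain ⟨z0, hz0T, hz0U⟩ := hfix
  simp only [Set.mem_setOf_eq] at hz0T hz0U
  have hsp : 0 < lam + mu - lam * mu := by
    nlinarith [sq_nonneg (lam - mu), mul_pos hlam hmu]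
  have hset : {x | (U ∘ T) x = x} = {x | T x = x} ∩ {x | U x = x} := by
    ext x
    simp only [Set.mem_setOf_eq, Set.mem_inter_iff, Function.comp_apply]
    constructor
    · intro hx
      have hA := hT.2 x z0 hz0T
      have hB := hU.2 (T x) z0 hz0U
      rw [hx] at hB
      have hsum : ⟪z0 - x, T x - x⟫ + ⟪z0 - T x, x - T x⟫ = ‖T x - x‖ ^ 2 := by
        rw [← real_inner_self_eq_norm_sq]
        simp only [inner_sub_left, inner_sub_right]
        ring
      have hnorm : ‖x - T x‖ = ‖T x - x‖ := norm_sub_rev _ _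
      rw [hnorm] at hB
      have hBval : ⟪z0 - T x, x - T x⟫ = ‖T x - x‖ ^ 2 - ⟪z0 - x, T x - x⟫ := by
        linarith
      rw [hBval] at hB
      have hsq : ‖T x - x‖ ^ 2 ≤ 0 := by nlinarith [sq_nonneg ‖T x - x‖]
      have h0 : T x - x = 0 := by
        have := sq_nonneg ‖T x - x‖
        have : ‖T x - x‖ = 0 := by nlinarith [norm_nonneg (T x - x)]
        exact norm_eq_zero.mp this
      have hTx : T x = x := by rwa [sub_eq_zero] at h0
      exact ⟨hTx, by rwa [hTx] at hx⟩
    · rintro ⟨h1, h2⟩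
      rw [h1, h2]
  refine ⟨⟨⟨z0, by simp [Function.comp_apply, hz0T, hz0U]⟩, ?_⟩, hset⟩
  intro x z hz
  have hz' : T z = z ∧ U z = z := by
    have := hset ▸ (Set.mem_setOf_eq ▸ hz : z ∈ {x | (U ∘ T) x = x})
    exact this
  obtain ⟨hzT, hzU⟩ := hz'
  have hA := hT.2 x z hzT
  have hB := hU.2 (T x) z hzU
  set y := T x with hy
  set w := U y with hw
  have hcomp : (U ∘ T) x = w := rfl
  rw [hcomp]
  -- decompositions
  have e1 : w - x = (w - y) + (y - x) := by abel
  have e2 : z - y = (z - x) - (y - x) := by abel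
  have hinner : ⟪z - x, w - x⟫ = ⟪z - x, w - y⟫ + ⟪z - x, y - x⟫ := by
    rw [e1, inner_add_right]
  have hnormsq : ‖w - x‖ ^ 2 = ‖w - y‖ ^ 2 + 2 * ⟪y - x, w - y⟫ + ‖y - x‖ ^ 2 := by
    rw [e1, norm_add_sq_real, real_inner_comm]
  have hBval : ⟪z - y, w - y⟫ = ⟪z - x, w - y⟫ - ⟪y - x, w - y⟫ := by
    rw [e2, inner_sub_left]
  rw [hBval] at hB
  have ht1 : ⟪y - x, w - y⟫ ≤ ‖y - x‖ * ‖w - y‖ := real_inner_le_norm _ _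
  have ht2 : -(‖y - x‖ * ‖w - y‖) ≤ ⟪y - x, w - y⟫ :=
    neg_le_of_abs_le (abs_real_inner_le_norm _ _)
  have key := key_ineq lam mu (‖y - x‖) (‖w - y‖) (⟪y - x, w - y⟫)
    (⟪z - x, y - x⟫) (⟪z - x, w - y⟫) hlam hmu h4 ht1 ht2 hA (by linarith)
  rw [hnu, hinner, hnormsq]
  linarith
end

section
/- Let T, U : H → H be λ- and μ-relaxed cutters with λ, μ > 0, λμ < 4 and Fix T ∩ Fix U ≠ ∅. Set ν := 4(λ + μ − λμ)/(4 − λμ), α := √(1/λ − 1/ν) − √(1/μ − 1/ν), β := max{√(1/λ − 1/ν), √(1/μ − 1/ν)}. Then for every x ∉ Fix T ∩ Fix U, ‖UT(x) − x‖ ≥ (|α|/(1 + β√ν))² · max{‖T(x) − x‖², ‖UT(x) − T(x)‖²} / d(x, Fix T ∩ Fix U). -/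
open RealInnerProductSpace

lemma tri_aux (x y : ℝ) : |x| - |y| ≤ |x + y| := by
  have h := abs_sub_abs_le_abs_sub x (-y)
  simpa [sub_neg_eq_add] using h

set_option maxHeartbeats 1000000 in
/-- Pure real-number lemma encapsulating the final estimate. -/
lemma key_real (ν s t U V p d Q : ℝ) (hν : 0 < ν) (hs : 0 ≤ s) (ht : 0 ≤ t)
    (hU : 0 ≤ U) (hV : 0 ≤ V) (hp : 0 ≤ p) (hd : 0 ≤ d) (hUVp : |U - V| ≤ p)
    (hQ : p ^ 2 / ν + (s * U - t * V) ^ 2 ≤ Q) (hdp : Q ≤ d * p) :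
    (|s - t| / (1 + max s t * Real.sqrt ν)) ^ 2 * max (U ^ 2) (V ^ 2) ≤ d * p := by
  set A := |s - t| with hA
  set B := max s t with hB
  set r := Real.sqrt ν with hr
  have hr0 : 0 < r := Real.sqrt_pos.mpr hν
  have hr2 : r ^ 2 = ν := Real.sq_sqrt hν.le
  have hA0 : 0 ≤ A := abs_nonneg _
  have hB0 : 0 ≤ B := le_trans hs (le_max_left _ _)
  have hden : 0 < 1 + B * r := by positivity
  have hM : max (U ^ 2) (V ^ 2) = (max U V) ^ 2 := by
    rcases le_total U V with h | h
    · rw [max_eq_right h, max_eq_right (by nlinarith)]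
    · rw [max_eq_left h, max_eq_left (by nlinarith)]
  set M := max U V with hMdef
  have hM0 : 0 ≤ M := le_trans hU (le_max_left _ _)
  rw [hM, div_pow, div_mul_eq_mul_div, div_le_iff₀ (by positivity)]
  have hdp' : p ^ 2 / ν + (s * U - t * V) ^ 2 ≤ d * p := le_trans hQ hdp
  have hdp0 : 0 ≤ d * p := le_trans (by positivity) hdp'
  have hsq : (1 + B * r) ^ 2 = 1 + 2 * B * r + ν * B ^ 2 := by
    rw [← hr2]; ring
  have hsqge : ν * B ^ 2 ≤ (1 + B * r) ^ 2 := by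
    rw [hsq]; nlinarith [mul_nonneg hB0 hr0.le]
  rcases le_or_gt (A * M) (B * p) with hcase | hcase
  · -- A*M ≤ B*p : use d*p ≥ p²/ν
    have h1 : p ^ 2 ≤ d * p * ν := by
      rw [div_add' _ _ _ (ne_of_gt hν), div_le_iff₀ hν] at hdp'
      nlinarith [sq_nonneg (s * U - t * V)]
    have h2 : (A * M) ^ 2 ≤ (B * p) ^ 2 := by
      have h3 := mul_nonneg hA0 hM0
      nlinarith
    calc A ^ 2 * M ^ 2 = (A * M) ^ 2 := by ring
      _ ≤ (B * p) ^ 2 := h2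
      _ = B ^ 2 * p ^ 2 := by ring
      _ ≤ B ^ 2 * (d * p * ν) := mul_le_mul_of_nonneg_left h1 (sq_nonneg B)
      _ = (d * p) * (ν * B ^ 2) := by ring
      _ ≤ (d * p) * (1 + B * r) ^ 2 := mul_le_mul_of_nonneg_left hsqge hdp0
  · -- B*p < A*M
    have hkey : A * M - B * p ≤ |s * U - t * V| := by
      rcases le_total V U with h | h
      · have hMU : M = U := max_eq_left h
        have h2 : U - V ≤ p := (abs_le.mp hUVp).2
        have h3 : t ≤ B := le_max_right _ _
        have h4 : (0:ℝ) ≤ U - V := by linarith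
        have h5 : t * (U - V) ≤ B * p := mul_le_mul h3 h2 h4 hB0
        calc A * M - B * p ≤ |(s - t) * U| - |t * (U - V)| := by
              rw [abs_mul, abs_mul, abs_of_nonneg h4, abs_of_nonneg ht,
                abs_of_nonneg hU, hMU]
              linarith
          _ ≤ |(s - t) * U + t * (U - V)| := tri_aux _ _
          _ = |s * U - t * V| := by rw [show (s - t) * U + t * (U - V) = s * U - t * V by ring]
      · have hMV : M = V := max_eq_right h
        have h2 : V - U ≤ p := by have := (abs_le.mp hUVp).1; linarith
        have h3 : s ≤ B := le_max_left _ _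
        have h4 : (0:ℝ) ≤ V - U := by linarith
        have h5 : s * (V - U) ≤ B * p := mul_le_mul h3 h2 h4 hB0
        calc A * M - B * p ≤ |(t - s) * V| - |s * (V - U)| := by
              rw [abs_mul, abs_mul, abs_of_nonneg h4, abs_of_nonneg hs,
                abs_of_nonneg hV, abs_sub_comm t s, ← hA, hMV]
              linarith
          _ ≤ |(t - s) * V + s * (V - U)| := tri_aux _ _
          _ = |s * U - t * V| := by
              rw [show (t - s) * V + s * (V - U) = -(s * U - t * V) by ring, abs_neg]
    have hsq2 : (A * M - B * p) ^ 2 ≤ (s * U - t * V) ^ 2 := by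
      have h0 : (0:ℝ) ≤ A * M - B * p := by linarith
      calc (A * M - B * p) ^ 2 ≤ |s * U - t * V| ^ 2 := by
            exact pow_le_pow_left₀ h0 hkey 2
        _ = (s * U - t * V) ^ 2 := sq_abs _
    have hdp2 : p ^ 2 / ν + (A * M - B * p) ^ 2 ≤ d * p := by linarith
    have h1 : p ^ 2 + ν * (A * M - B * p) ^ 2 ≤ d * p * ν := by
      rw [div_add' _ _ _ (ne_of_gt hν), div_le_iff₀ hν] at hdp2
      nlinarith
    have hk0 : (0:ℝ) < 1 + ν * B ^ 2 := by positivity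
    have h2 : (p ^ 2 + ν * (A * M - B * p) ^ 2) * (1 + ν * B ^ 2) ≤
        (d * p * ν) * (1 + ν * B ^ 2) := mul_le_mul_of_nonneg_right h1 hk0.le
    have h3 : ν * ((A * M) ^ 2) ≤ (d * p * ν) * (1 + ν * B ^ 2) := by
      nlinarith [sq_nonneg ((1 + ν * B ^ 2) * p - ν * (A * B * M))]
    have hk : (A * M) ^ 2 ≤ d * p * (1 + ν * B ^ 2) := by nlinarith
    calc A ^ 2 * M ^ 2 = (A * M) ^ 2 := by ring
      _ ≤ d * p * (1 + ν * B ^ 2) := hk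
      _ ≤ d * p * (1 + B * r) ^ 2 := by
          apply mul_le_mul_of_nonneg_left _ hdp0
          rw [hsq]
          nlinarith [mul_nonneg hB0 hr0.le]

set_option maxHeartbeats 1000000 in
theorem stmt_6 {H : Type*} [NormedAddCommGroup H] [InnerProductSpace ℝ H]
    (T U : H → H) (lam mu : ℝ) (hlam : 0 < lam) (hmu : 0 < mu) (hne : lam ≠ mu)
    (hT : IsRelaxedCutter T lam) (hU : IsRelaxedCutter U mu)
    (h4 : lam * mu < 4) (hfix : ({x | T x = x} ∩ {x | U x = x}).Nonempty)
    (nu alpha beta : ℝ)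
    (hnu : nu = 4 * (lam + mu - lam * mu) / (4 - lam * mu))
    (halpha : alpha = Real.sqrt (1 / lam - 1 / nu) - Real.sqrt (1 / mu - 1 / nu))
    (hbeta : beta = max (Real.sqrt (1 / lam - 1 / nu)) (Real.sqrt (1 / mu - 1 / nu))) :
    ∀ x, x ∉ {y | T y = y} ∩ {y | U y = y} →
      ‖U (T x) - x‖ ≥ (|alpha| / (1 + beta * Real.sqrt nu)) ^ 2 *
        (max (‖T x - x‖ ^ 2) (‖U (T x) - T x‖ ^ 2) /
          Metric.infDist x ({y | T y = y} ∩ {y | U y = y})) := by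
  obtain ⟨-, hTin⟩ := hT
  obtain ⟨-, hUin⟩ := hU
  intro x _
  set F := {y | T y = y} ∩ {y | U y = y} with hF
  -- numeric facts
  have hP4 : (0:ℝ) < 4 - lam * mu := by linarith
  have hS : (0:ℝ) < lam + mu - lam * mu := by
    nlinarith [sq_nonneg (lam - mu), mul_pos hlam hmu, mul_pos (mul_pos hlam hmu) hP4]
  have hν : 0 < nu := by rw [hnu]; exact div_pos (by linarith) hP4
  have hνne : nu ≠ 0 := ne_of_gt hν
  have hlamnu : lam ≤ nu := by
    rw [hnu, le_div_iff₀ hP4]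
    nlinarith [mul_nonneg hmu.le (sq_nonneg (lam - 2))]
  have hmunu : mu ≤ nu := by
    rw [hnu, le_div_iff₀ hP4]
    nlinarith [mul_nonneg hlam.le (sq_nonneg (mu - 2))]
  have ha : (0:ℝ) ≤ 1 / lam - 1 / nu := by
    have := one_div_le_one_div_of_le hlam hlamnu
    linarith
  have hb : (0:ℝ) ≤ 1 / mu - 1 / nu := by
    have := one_div_le_one_div_of_le hmu hmunu
    linarith
  have hab : 4 * ((1 / lam - 1 / nu) * (1 / mu - 1 / nu)) = (1 - 2 / nu) ^ 2 := by
    rw [hnu]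
    field_simp
    ring
  set s := Real.sqrt (1 / lam - 1 / nu) with hsdef
  set t := Real.sqrt (1 / mu - 1 / nu) with htdef
  have hs0 : 0 ≤ s := Real.sqrt_nonneg _
  have ht0 : 0 ≤ t := Real.sqrt_nonneg _
  have hs2 : s ^ 2 = 1 / lam - 1 / nu := Real.sq_sqrt ha
  have ht2 : t ^ 2 = 1 / mu - 1 / nu := Real.sq_sqrt hb
  have h2st : |1 - 2 / nu| = 2 * (s * t) := by
    have h1 : (2 * (s * t)) ^ 2 = (1 - 2 / nu) ^ 2 := by
      rw [← hab]; rw [mul_pow, mul_pow, hs2, ht2]; ring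
    have h2 : 0 ≤ 2 * (s * t) := by positivity
    calc |1 - 2 / nu| = Real.sqrt ((1 - 2 / nu) ^ 2) := (Real.sqrt_sq_eq_abs _).symm
      _ = Real.sqrt ((2 * (s * t)) ^ 2) := by rw [h1]
      _ = |2 * (s * t)| := Real.sqrt_sq_eq_abs _
      _ = 2 * (s * t) := abs_of_nonneg h2
  -- vectors
  set u := T x - x with hu
  set v := U (T x) - T x with hv
  have hw : U (T x) - x = u + v := by rw [hu, hv]; abel
  set p := ‖U (T x) - x‖ with hp
  have hp0 : 0 ≤ p := norm_nonneg _
  have hpuv : p = ‖u + v‖ := by rw [hp, hw]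
  have hpsq : p ^ 2 = ‖u‖ ^ 2 + 2 * ⟪u, v⟫ + ‖v‖ ^ 2 := by
    rw [hpuv, @norm_add_sq_real]
  have habsi : |⟪u, v⟫| ≤ ‖u‖ * ‖v‖ := abs_real_inner_le_norm u v
  have hQz : ∀ z ∈ F, p ^ 2 / nu + (s * ‖u‖ - t * ‖v‖) ^ 2 ≤ dist x z * p := by
    intro z hz
    obtain ⟨hz1, hz2⟩ := hz
    have e1 : ‖u‖ ^ 2 ≤ lam * ⟪z - x, u⟫ := hTin x z hz1
    have e2 : ‖v‖ ^ 2 ≤ mu * ⟪z - T x, v⟫ := hUin (T x) z hz2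
    have e1' : ‖u‖ ^ 2 / lam ≤ ⟪z - x, u⟫ := by
      rw [div_le_iff₀ hlam]; linarith [e1]
    have e2' : ‖v‖ ^ 2 / mu ≤ ⟪z - T x, v⟫ := by
      rw [div_le_iff₀ hmu]; linarith [e2]
    have hsplit : ⟪z - x, v⟫ = ⟪z - T x, v⟫ + ⟪u, v⟫ := by
      rw [← inner_add_left]
      congr 1
      rw [hu]; abel
    have hinner : ⟪z - x, u + v⟫ = ⟪z - x, u⟫ + ⟪z - T x, v⟫ + ⟪u, v⟫ := by
      rw [inner_add_right, hsplit]; ring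
    have hCS : ⟪z - x, u + v⟫ ≤ ‖z - x‖ * ‖u + v‖ := real_inner_le_norm _ _
    have hdist : dist x z = ‖z - x‖ := by rw [dist_eq_norm, norm_sub_rev]
    have hQle : ‖u‖ ^ 2 / lam + ‖v‖ ^ 2 / mu + ⟪u, v⟫ ≤ dist x z * p := by
      rw [hdist, hpuv]
      have := hinner
      linarith [hCS, e1', e2']
    -- algebraic step
    have hcross : -(2 * (s * t)) * (‖u‖ * ‖v‖) ≤ (1 - 2 / nu) * ⟪u, v⟫ := by
      have h1 : -(|1 - 2 / nu| * |⟪u, v⟫|) ≤ (1 - 2 / nu) * ⟪u, v⟫ := by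
        rw [← abs_mul]; exact neg_abs_le _
      have h2 : |1 - 2 / nu| * |⟪u, v⟫| ≤ 2 * (s * t) * (‖u‖ * ‖v‖) := by
        rw [h2st]
        exact mul_le_mul_of_nonneg_left habsi (by positivity)
      linarith
    have expand : ‖u‖ ^ 2 / lam + ‖v‖ ^ 2 / mu + ⟪u, v⟫ - p ^ 2 / nu
        = s ^ 2 * ‖u‖ ^ 2 + t ^ 2 * ‖v‖ ^ 2 + (1 - 2 / nu) * ⟪u, v⟫ := by
      rw [hs2, ht2, hpsq]
      field_simp
      ring
    have hsqexp : (s * ‖u‖ - t * ‖v‖) ^ 2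
        = s ^ 2 * ‖u‖ ^ 2 + t ^ 2 * ‖v‖ ^ 2 - 2 * (s * t) * (‖u‖ * ‖v‖) := by ring
    linarith [hcross]
  have hQ0 : 0 ≤ p ^ 2 / nu + (s * ‖u‖ - t * ‖v‖) ^ 2 := by positivity
  have hdpQ : p ^ 2 / nu + (s * ‖u‖ - t * ‖v‖) ^ 2 ≤ Metric.infDist x F * p := by
    rcases eq_or_lt_of_le hp0 with hpe | hppos
    · obtain ⟨z, hz⟩ := hfix
      have h1 := hQz z hz
      rw [← hpe] at h1 ⊢
      simpa using h1
    · have hmain : (p ^ 2 / nu + (s * ‖u‖ - t * ‖v‖) ^ 2) / p ≤ Metric.infDist x F := by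
        by_contra hcon
        push_neg at hcon
        obtain ⟨z, hz, hlt⟩ := (Metric.infDist_lt_iff hfix).mp hcon
        have h1 := hQz z hz
        rw [lt_div_iff₀ hppos] at hlt
        linarith
      calc p ^ 2 / nu + (s * ‖u‖ - t * ‖v‖) ^ 2
          = (p ^ 2 / nu + (s * ‖u‖ - t * ‖v‖) ^ 2) / p * p := by
            field_simp
        _ ≤ Metric.infDist x F * p := mul_le_mul_of_nonneg_right hmain hp0
  have hUVp : |‖u‖ - ‖v‖| ≤ p := by
    have h1 := abs_norm_sub_norm_le u (-v)
    rw [norm_neg, sub_neg_eq_add] at h1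
    rw [hpuv]
    exact h1
  have main := key_real nu s t ‖u‖ ‖v‖ p (Metric.infDist x F) _ hν hs0 ht0
    (norm_nonneg u) (norm_nonneg v) hp0 Metric.infDist_nonneg hUVp le_rfl hdpQ
  rw [halpha, hbeta]
  by_cases hd0 : Metric.infDist x F = 0
  · rw [hF] at hd0 ⊢
    rw [hd0, div_zero, mul_zero]
    exact norm_nonneg _
  · have hdpos : 0 < Metric.infDist x F :=
      lt_of_le_of_ne Metric.infDist_nonneg (Ne.symm hd0)
    rw [ge_iff_le, mul_div_assoc']
    rw [div_le_iff₀ hdpos]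
    calc (|s - t| / (1 + max s t * Real.sqrt nu)) ^ 2 * max (‖u‖ ^ 2) (‖v‖ ^ 2)
        ≤ Metric.infDist x F * p := main
      _ = p * Metric.infDist x F := mul_comm _ _
end

section
/- Let T, U : H → H be λ- and μ-relaxed cutters with λ, μ > 0, λμ < 4 and Fix T ∩ Fix U ≠ ∅. Let z ∈ Fix T ∩ Fix U, r > 0, R := max{r, (λ−1)r}. If T is weakly regular over B(z, r) and U is weakly regular over B(z, R), then UT is weakly regular over B(z, r). -/
open RealInnerProductSpace Filter

/-- `V` is weakly regular over `S`: for every sequence in `S` converging weakly to `y`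
with `‖V xₖ - xₖ‖ → 0`, the point `y` is a fixed point of `V`. -/
def WeaklyRegularOver {H : Type*} [NormedAddCommGroup H] [InnerProductSpace ℝ H]
    (V : H → H) (S : Set H) : Prop :=
  ∀ (x : ℕ → H) (y : H), (∀ k, x k ∈ S) →
    (∀ v : H, Tendsto (fun k => ⟪x k, v⟫) atTop (nhds ⟪y, v⟫)) →
    Tendsto (fun k => ‖V (x k) - x k‖) atTop (nhds 0) →
    V y = y

/-- Quadratic positivity: if `lam * mu < 4`, the form `mu a² + lam b² - lam mu ab`
dominates a positive multiple of `a² + b²`. -/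
theorem quad_aux (lam mu : ℝ) (hlam : 0 < lam) (hmu : 0 < mu) (h4 : lam * mu < 4)
    (a b : ℝ) (ha : 0 ≤ a) (hb : 0 ≤ b) :
    (1 - Real.sqrt (lam * mu) / 2) * min lam mu * (a ^ 2 + b ^ 2) ≤
      mu * a ^ 2 + lam * b ^ 2 - lam * mu * (a * b) := by
  set s := Real.sqrt (lam * mu) with hs
  have hs2 : s ^ 2 = lam * mu := Real.sq_sqrt (by positivity)
  have hspos : 0 < s := Real.sqrt_pos.2 (by positivity)
  have hslt : s < 2 := by nlinarith
  have hamgm : 2 * s * (a * b) ≤ mu * a ^ 2 + lam * b ^ 2 := by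
    have h := sq_nonneg (Real.sqrt mu * a - Real.sqrt lam * b)
    have h1 : Real.sqrt mu ^ 2 = mu := Real.sq_sqrt hmu.le
    have h2 : Real.sqrt lam ^ 2 = lam := Real.sq_sqrt hlam.le
    have h3 : Real.sqrt lam * Real.sqrt mu = s := by
      rw [hs, ← Real.sqrt_mul hlam.le]
    have he : mu * a ^ 2 + lam * b ^ 2 - 2 * s * (a * b)
        = (Real.sqrt mu * a - Real.sqrt lam * b) ^ 2 := by
      linear_combination (-(a^2)) * h1 - b^2 * h2 + 2*(a*b) * h3
    linarith [he ▸ h]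
  have h5 : s ^ 2 * (a * b) ≤ (s / 2) * (mu * a ^ 2 + lam * b ^ 2) := by nlinarith
  have h6 : (0:ℝ) ≤ 1 - s / 2 := by linarith
  rcases min_cases lam mu with ⟨h, hle⟩ | ⟨h, hle⟩ <;> rw [h, ← hs2]
  · nlinarith [mul_nonneg (mul_nonneg h6 (sub_nonneg.2 hle)) (sq_nonneg a)]
  · nlinarith [mul_nonneg (mul_nonneg h6 (sub_nonneg.2 hle.le)) (sq_nonneg b)]

/-- If `q` satisfies the relaxed-cutter inequality for `p` with `‖p - z‖ ≤ r`,
then `‖q - z‖ ≤ max r ((lam - 1) r)`. -/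
theorem ball_aux {H : Type*} [NormedAddCommGroup H] [InnerProductSpace ℝ H]
    (lam : ℝ) (hlam : 0 < lam) (z p q : H)
    (hc : lam * ⟪z - p, q - p⟫ ≥ ‖q - p‖ ^ 2)
    (r : ℝ) (hr : 0 < r) (hp : ‖p - z‖ ≤ r) :
    ‖q - z‖ ≤ max r ((lam - 1) * r) := by
  set d := ‖p - z‖ with hd
  set t := ‖q - p‖ with ht
  set ip := ⟪z - p, q - p⟫ with hip
  have hcs : ip ≤ d * t := by
    calc ip ≤ ‖z - p‖ * ‖q - p‖ := real_inner_le_norm _ _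
    _ = d * t := by rw [← norm_neg (z - p)]; simp [hd, ht]
  have hexp : ‖q - z‖ ^ 2 = d ^ 2 - 2 * ip + t ^ 2 := by
    have h0 : q - z = (p - z) + (q - p) := by abel
    rw [h0, ← real_inner_self_eq_norm_sq]
    simp only [inner_add_add_self, real_inner_self_eq_norm_sq, hd, ht, hip]
    have e1 : ⟪p - z, q - p⟫ = -ip := by rw [hip, ← inner_neg_left]; congr 1; abel
    have e2 : ⟪q - p, p - z⟫ = -ip := by rw [real_inner_comm]; exact e1
    rw [e1, e2]; ring
  have hd0 : 0 ≤ d := norm_nonneg _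
  have ht0 : 0 ≤ t := norm_nonneg _
  have hq0 : 0 ≤ ‖q - z‖ := norm_nonneg _
  have hip0 : 0 ≤ ip := by nlinarith
  rcases le_or_gt lam 2 with hl | hl
  · have h1 : ‖q - z‖ ^ 2 ≤ r ^ 2 := by
      nlinarith [mul_nonneg (sub_nonneg.2 hl) hip0, pow_le_pow_left₀ hd0 hp 2]
    have := le_max_left r ((lam - 1) * r)
    nlinarith
  · have htd : t ≤ lam * d := by
      rcases eq_or_lt_of_le ht0 with h0 | h0
      · nlinarith [mul_nonneg hlam.le hd0]
      · nlinarith [mul_le_mul_of_nonneg_left hcs hlam.le]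
    have h_t2 : t ^ 2 ≤ (lam * d) ^ 2 := pow_le_pow_left₀ ht0 htd 2
    have h_d2 : d ^ 2 ≤ r ^ 2 := pow_le_pow_left₀ hd0 hp 2
    have h1 : ‖q - z‖ ^ 2 ≤ ((lam - 1) * r) ^ 2 := by
      nlinarith [mul_nonneg (sub_nonneg.2 hl.le) (sub_nonneg.2 h_t2),
        mul_nonneg (sq_nonneg (lam - 1)) (sub_nonneg.2 h_d2), hc, hlam.le]
    have h2 : 0 ≤ (lam - 1) * r := by nlinarith
    have := le_max_right r ((lam - 1) * r)
    nlinarith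

theorem stmt_9 {H : Type*} [NormedAddCommGroup H] [InnerProductSpace ℝ H]
    (T U : H → H) (lam mu : ℝ) (hlam : 0 < lam) (hmu : 0 < mu)
    (hT : IsRelaxedCutter T lam) (hU : IsRelaxedCutter U mu)
    (h4 : lam * mu < 4) (z : H) (hzT : T z = z) (hzU : U z = z)
    (r R : ℝ) (hr : 0 < r) (hR : R = max r ((lam - 1) * r))
    (hTreg : WeaklyRegularOver T (Metric.closedBall z r))
    (hUreg : WeaklyRegularOver U (Metric.closedBall z R)) :
    WeaklyRegularOver (U ∘ T) (Metric.closedBall z r) := by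
  obtain ⟨-, hTc⟩ := hT
  obtain ⟨-, hUc⟩ := hU
  intro x y hxS hweak hUT
  simp only [Function.comp_apply] at hUT
  have hx : ∀ k, ‖x k - z‖ ≤ r := fun k => by
    have := hxS k; rwa [Metric.mem_closedBall, dist_eq_norm] at this
  set a : ℕ → ℝ := fun k => ‖T (x k) - x k‖ with ha
  set b : ℕ → ℝ := fun k => ‖U (T (x k)) - T (x k)‖ with hb
  set s : ℕ → ℝ := fun k => ‖U (T (x k)) - x k‖ with hs
  -- key pointwise inequality
  have key : ∀ k, mu * a k ^ 2 + lam * b k ^ 2 ≤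
      lam * mu * (r * s k + a k * b k) := by
    intro k
    set p := x k with hp
    set u := T p - p with hu
    set v := U (T p) - T p with hv
    have h1 := hTc p z hzT
    have h2 := hUc (T p) z hzU
    have hsplit : ⟪z - T p, v⟫ = ⟪z - p, v⟫ - ⟪u, v⟫ := by
      rw [← inner_sub_left, hu]; congr 1; abel
    rw [hsplit] at h2
    have huv : u + v = U (T p) - p := by rw [hu, hv]; abel
    have hadd : ⟪z - p, u⟫ + ⟪z - p, v⟫ ≤ r * ‖U (T p) - p‖ := by
      calc ⟪z - p, u⟫ + ⟪z - p, v⟫ = ⟪z - p, u + v⟫ := by rw [inner_add_right]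
      _ ≤ ‖z - p‖ * ‖u + v‖ := real_inner_le_norm _ _
      _ ≤ r * ‖U (T p) - p‖ := by
          rw [huv]
          refine mul_le_mul_of_nonneg_right ?_ (norm_nonneg _)
          rw [← norm_neg]; simpa using hx k
    have habs : -(‖u‖ * ‖v‖) ≤ ⟪u, v⟫ := neg_le_of_abs_le (abs_real_inner_le_norm u v)
    nlinarith [norm_nonneg u, norm_nonneg v, sq_nonneg (‖u‖ - ‖v‖), mul_pos hlam hmu]
  -- the constant
  set eps : ℝ := (1 - Real.sqrt (lam * mu) / 2) * min lam mu with heps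
  have hsqlt : Real.sqrt (lam * mu) < 2 := by
    nlinarith [Real.sq_sqrt (le_of_lt (mul_pos hlam hmu)),
      Real.sqrt_pos.2 (mul_pos hlam hmu)]
  have heps_pos : 0 < eps := by
    apply mul_pos (by linarith) (lt_min hlam hmu)
  have key2 : ∀ k, eps * (a k ^ 2 + b k ^ 2) ≤ lam * mu * r * s k := by
    intro k
    have hq := quad_aux lam mu hlam hmu h4 (a k) (b k) (norm_nonneg _) (norm_nonneg _)
    have hk := key k
    rw [heps]; nlinarith
  have hs0 : Tendsto s atTop (nhds 0) := hUT
  -- aₖ², bₖ² → 0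
  have hsq : ∀ (f : ℕ → ℝ), (∀ k, f k = a k ∨ f k = b k) → Tendsto (fun k => f k ^ 2) atTop (nhds 0) := by
    intro f hf
    have hbound : ∀ k, f k ^ 2 ≤ (lam * mu * r / eps) * s k := by
      intro k
      have := key2 k
      rcases hf k with h | h <;> rw [h, div_mul_eq_mul_div, le_div_iff₀ heps_pos] <;>
        [nlinarith [sq_nonneg (b k)]; nlinarith [sq_nonneg (a k)]]
    have hg : Tendsto (fun k => (lam * mu * r / eps) * s k) atTop (nhds 0) := by
      have := hs0.const_mul (lam * mu * r / eps)
      simpa using this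
    exact squeeze_zero (fun k => sq_nonneg _) hbound hg
  have ha2 : Tendsto (fun k => a k ^ 2) atTop (nhds 0) := hsq a (fun k => Or.inl rfl)
  have hb2 : Tendsto (fun k => b k ^ 2) atTop (nhds 0) := hsq b (fun k => Or.inr rfl)
  have ha0 : Tendsto a atTop (nhds 0) := by
    have h := ha2.sqrt
    rw [Real.sqrt_zero] at h
    exact h.congr fun k => Real.sqrt_sq (norm_nonneg _)
  have hb0 : Tendsto b atTop (nhds 0) := by
    have h := hb2.sqrt
    rw [Real.sqrt_zero] at h
    exact h.congr fun k => Real.sqrt_sq (norm_nonneg _)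
  -- T y = y
  have hTy : T y = y := hTreg x y hxS hweak ha0
  -- T xₖ ∈ closedBall z R
  have hTball : ∀ k, T (x k) ∈ Metric.closedBall z R := by
    intro k
    rw [Metric.mem_closedBall, dist_eq_norm, hR]
    exact ball_aux lam hlam z (x k) (T (x k)) (hTc (x k) z hzT) r hr (hx k)
  -- T xₖ ⇀ y
  have hTweak : ∀ v : H, Tendsto (fun k => ⟪T (x k), v⟫) atTop (nhds ⟪y, v⟫) := by
    intro v
    have hzero : Tendsto (fun k => ⟪T (x k) - x k, v⟫) atTop (nhds 0) := by
      have hgt : Tendsto (fun k => a k * ‖v‖) atTop (nhds 0) := by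
        simpa using ha0.mul_const ‖v‖
      exact squeeze_zero_norm
        (fun k => by rw [Real.norm_eq_abs]; exact abs_real_inner_le_norm _ _) hgt
    have := (hweak v).add hzero
    rw [add_zero] at this
    exact this.congr fun k => by rw [← inner_add_left]; congr 1; abel
  -- U y = y
  have hUy : U y = y := hUreg (fun k => T (x k)) y hTball hTweak hb0
  show U (T y) = y
  rw [hTy, hUy]
end

section
/- Let T, U : H → H be λ- and μ-relaxed cutters with λ, μ > 0, λμ < 4 and Fix T ∩ Fix U ≠ ∅. Let z ∈ Fix T ∩ Fix U, r > 0, R := max{r, (λ−1)r}. If T is regular over B(z, r), U is regular over B(z, R), and the pair {Fix T, Fix U} is regular over B(z, r), then UT is regular over B(z, r). -/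
open RealInnerProductSpace Filter

/-- `V` is regular over `S`: for every sequence in `S` with `‖V xₖ - xₖ‖ → 0`,
one has `d(xₖ, Fix V) → 0`. -/
def RegularOver {H : Type*} [NormedAddCommGroup H] [InnerProductSpace ℝ H]
    (V : H → H) (S : Set H) : Prop :=
  ∀ x : ℕ → H, (∀ k, x k ∈ S) →
    Tendsto (fun k => ‖V (x k) - x k‖) atTop (nhds 0) →
    Tendsto (fun k => Metric.infDist (x k) {y | V y = y}) atTop (nhds 0)

/-- The pair `{A, B}` is regular over `S`: for every sequence in `S` with
`max {d(xₖ, A), d(xₖ, B)} → 0`, one has `d(xₖ, A ∩ B) → 0`. -/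
def PairRegularOver {H : Type*} [NormedAddCommGroup H] [InnerProductSpace ℝ H]
    (A B S : Set H) : Prop :=
  ∀ x : ℕ → H, (∀ k, x k ∈ S) →
    Tendsto (fun k => max (Metric.infDist (x k) A) (Metric.infDist (x k) B))
      atTop (nhds 0) →
    Tendsto (fun k => Metric.infDist (x k) (A ∩ B)) atTop (nhds 0)

lemma key_ineq_s10 (lam mu a b D : ℝ) (hlam : 0 < lam) (hmu : 0 < mu)
    (h1 : mu*a^2 + lam*b^2 - lam*mu*(a*b) ≤ lam*mu*D) :
    (4 - lam*mu)*(a^2+b^2) ≤ 4*(lam+mu)*D := by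
  have hpos : (0:ℝ) ≤ 4*(lam+mu) := by positivity
  have h2 := mul_le_mul_of_nonneg_left h1 hpos
  have hident : lam*mu*((4 - lam*mu)*(a^2+b^2)) ≤ lam*mu*(4*(lam+mu)*D) := by
    nlinarith [sq_nonneg (2*mu*a - lam*mu*b), sq_nonneg (2*lam*b - lam*mu*a)]
  exact le_of_mul_le_mul_left hident (mul_pos hlam hmu)

theorem stmt_10 {H : Type*} [NormedAddCommGroup H] [InnerProductSpace ℝ H]
    (T U : H → H) (lam mu : ℝ) (hlam : 0 < lam) (hmu : 0 < mu)
    (hT : IsRelaxedCutter T lam) (hU : IsRelaxedCutter U mu)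
    (h4 : lam * mu < 4) (z : H) (hzT : T z = z) (hzU : U z = z)
    (r R : ℝ) (hr : 0 < r) (hR : R = max r ((lam - 1) * r))
    (hTreg : RegularOver T (Metric.closedBall z r))
    (hUreg : RegularOver U (Metric.closedBall z R))
    (hpair : PairRegularOver {y | T y = y} {y | U y = y} (Metric.closedBall z r)) :
    RegularOver (U ∘ T) (Metric.closedBall z r) := by
  obtain ⟨-, hTineq⟩ := hT
  obtain ⟨-, hUineq⟩ := hU
  have h4lm : (0:ℝ) < 4 - lam*mu := by linarith
  intro x hx he
  have hzx : ∀ k, ‖z - x k‖ ≤ r := by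
    intro k
    have := hx k
    rw [Metric.mem_closedBall, dist_eq_norm] at this
    rwa [norm_sub_rev]
  -- key pointwise bound
  have hkey : ∀ k, (4 - lam*mu) * (‖T (x k) - x k‖^2 + ‖U (T (x k)) - T (x k)‖^2) ≤
      4*(lam+mu)*(r * ‖(U ∘ T) (x k) - x k‖) := by
    intro k
    set u := T (x k) - x k with hu
    set v := U (T (x k)) - T (x k) with hv
    have h1 : ‖u‖^2 ≤ lam * ⟪z - x k, u⟫ := hTineq (x k) z hzT
    have h2 : ‖v‖^2 ≤ mu * ⟪z - T (x k), v⟫ := hUineq (T (x k)) z hzU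
    have hsum : (U ∘ T) (x k) - x k = u + v := by
      rw [hu, hv]; simp only [Function.comp_apply]; abel
    have hzTx : z - T (x k) = (z - x k) - u := by rw [hu]; abel
    have e3 : ⟪z - T (x k), v⟫ = ⟪z - x k, v⟫ - ⟪u, v⟫ := by
      rw [hzTx, inner_sub_left]
    rw [e3] at h2
    have e1 := mul_le_mul_of_nonneg_left h1 hmu.le
    have e2 := mul_le_mul_of_nonneg_left h2 hlam.le
    have e4 : ⟪z - x k, u⟫ + ⟪z - x k, v⟫ ≤ r * ‖u + v‖ := by
      rw [← inner_add_right]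
      calc ⟪z - x k, u + v⟫ ≤ ‖z - x k‖ * ‖u + v‖ := real_inner_le_norm _ _
        _ ≤ r * ‖u + v‖ := mul_le_mul_of_nonneg_right (hzx k) (norm_nonneg _)
    have e5 : -(‖u‖ * ‖v‖) ≤ ⟪u, v⟫ := by
      have h := abs_real_inner_le_norm u v
      have h' := neg_abs_le (⟪u, v⟫ : ℝ)
      linarith
    have e4' := mul_le_mul_of_nonneg_left e4 (mul_pos hlam hmu).le
    have e5' := mul_le_mul_of_nonneg_left e5 (mul_pos hlam hmu).le
    have hek : ‖(U ∘ T) (x k) - x k‖ = ‖u + v‖ := by rw [hsum]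
    rw [hek]
    have hD : mu*‖u‖^2 + lam*‖v‖^2 - lam*mu*(‖u‖*‖v‖) ≤ lam*mu*(r * ‖u + v‖) := by
      linarith [e1, e2, e4', e5']
    exact key_ineq_s10 lam mu ‖u‖ ‖v‖ (r * ‖u + v‖) hlam hmu hD
  -- the two residuals tend to 0
  have hK : (0:ℝ) ≤ 4*(lam+mu)*r / (4 - lam*mu) :=
    div_nonneg (by positivity) h4lm.le
  set K : ℝ := 4*(lam+mu)*r / (4 - lam*mu) with hKdef
  have habound : ∀ k, ‖T (x k) - x k‖^2 ≤ K * ‖(U ∘ T) (x k) - x k‖ := by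
    intro k
    rw [hKdef, div_mul_eq_mul_div, le_div_iff₀ h4lm]
    nlinarith [hkey k, mul_nonneg h4lm.le (sq_nonneg ‖U (T (x k)) - T (x k)‖)]
  have hbbound : ∀ k, ‖U (T (x k)) - T (x k)‖^2 ≤ K * ‖(U ∘ T) (x k) - x k‖ := by
    intro k
    rw [hKdef, div_mul_eq_mul_div, le_div_iff₀ h4lm]
    nlinarith [hkey k, mul_nonneg h4lm.le (sq_nonneg ‖T (x k) - x k‖)]
  have hsqrt : Tendsto (fun k => Real.sqrt (K * ‖(U ∘ T) (x k) - x k‖))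
      atTop (nhds 0) := by
    have := (he.const_mul K).sqrt
    simpa only [mul_zero, Real.sqrt_zero] using this
  have ea : Tendsto (fun k => ‖T (x k) - x k‖) atTop (nhds 0) := by
    refine squeeze_zero (fun k => norm_nonneg _) (fun k => ?_) hsqrt
    have := Real.sqrt_le_sqrt (habound k)
    rwa [Real.sqrt_sq (norm_nonneg _)] at this
  have eb : Tendsto (fun k => ‖U (T (x k)) - T (x k)‖) atTop (nhds 0) := by
    refine squeeze_zero (fun k => norm_nonneg _) (fun k => ?_) hsqrt
    have := Real.sqrt_le_sqrt (hbbound k)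
    rwa [Real.sqrt_sq (norm_nonneg _)] at this
  -- T (x k) stays in the ball of radius R
  have hrR : r ≤ R := hR ▸ le_max_left _ _
  have hTball : ∀ k, T (x k) ∈ Metric.closedBall z R := by
    intro k
    rw [Metric.mem_closedBall, dist_eq_norm]
    set u := T (x k) - x k with hu
    have h1 : ‖u‖^2 ≤ lam * ⟪z - x k, u⟫ := hTineq (x k) z hzT
    have hTz : T (x k) - z = (x k - z) + u := by rw [hu]; abel
    have hflip : ⟪x k - z, u⟫ = -⟪z - x k, u⟫ := by
      rw [← inner_neg_left, neg_sub]
    have hexp : ‖T (x k) - z‖^2 = ‖z - x k‖^2 - 2*⟪z - x k, u⟫ + ‖u‖^2 := by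
      rw [hTz, norm_add_sq_real, hflip, norm_sub_rev (x k) z]; ring
    have hs2 : ‖z - x k‖^2 ≤ r^2 := by
      nlinarith [hzx k, norm_nonneg (z - x k)]
    by_cases hl2 : lam ≤ 2
    · have h6 : 0 ≤ 2*⟪z - x k, u⟫ - ‖u‖^2 := by
        nlinarith [h1, hlam, mul_nonneg (by linarith : (0:ℝ) ≤ 2 - lam) (sq_nonneg ‖u‖)]
      have hsq : ‖T (x k) - z‖^2 ≤ r^2 := by linarith
      have := Real.sqrt_le_sqrt hsq
      rw [Real.sqrt_sq (norm_nonneg _), Real.sqrt_sq hr.le] at this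
      linarith
    · push_neg at hl2
      have hCS : ⟪z - x k, u⟫ ≤ ‖z - x k‖ * ‖u‖ := real_inner_le_norm _ _
      have hub : ‖u‖ ≤ lam * ‖z - x k‖ := by
        rcases eq_or_lt_of_le (norm_nonneg u) with h0 | h0
        · rw [← h0]; positivity
        · nlinarith [hCS, h1, h0, hlam, mul_le_mul_of_nonneg_left hCS hlam.le]
      have ht2 : ‖u‖^2 ≤ lam^2 * ‖z - x k‖^2 := by
        nlinarith [mul_self_le_mul_self (norm_nonneg u) hub]
      have heq2 : lam * ‖T (x k) - z‖^2 =
          lam * (‖z - x k‖^2 - 2*⟪z - x k, u⟫ + ‖u‖^2) := by rw [hexp]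
      have h6 : lam * ‖T (x k) - z‖^2 ≤ lam*‖z - x k‖^2 + (lam-2)*‖u‖^2 := by
        linarith [heq2, h1]
      have h7 : lam * ‖T (x k) - z‖^2 ≤ lam * ((lam-1)^2 * ‖z - x k‖^2) := by
        linarith [h6, mul_le_mul_of_nonneg_left ht2 (by linarith : (0:ℝ) ≤ lam - 2)]
      have h8 : ‖T (x k) - z‖^2 ≤ (lam-1)^2 * ‖z - x k‖^2 :=
        le_of_mul_le_mul_left h7 hlam
      have h9 : ‖T (x k) - z‖^2 ≤ ((lam-1)*r)^2 := by
        linarith [h8, mul_le_mul_of_nonneg_left hs2 (sq_nonneg (lam-1))]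
      have hnn : (0:ℝ) ≤ (lam-1)*r := (mul_pos (by linarith) hr).le
      have := Real.sqrt_le_sqrt h9
      rw [Real.sqrt_sq (norm_nonneg _), Real.sqrt_sq hnn] at this
      calc ‖T (x k) - z‖ ≤ (lam-1)*r := this
        _ ≤ R := hR ▸ le_max_right _ _
  -- distances to the fixed point sets go to 0
  have hTd : Tendsto (fun k => Metric.infDist (x k) {y | T y = y}) atTop (nhds 0) :=
    hTreg x hx ea
  have hUd : Tendsto (fun k => Metric.infDist (T (x k)) {y | U y = y}) atTop (nhds 0) :=
    hUreg (fun k => T (x k)) hTball eb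
  have hUd' : Tendsto (fun k => Metric.infDist (x k) {y | U y = y}) atTop (nhds 0) := by
    refine squeeze_zero (fun k => Metric.infDist_nonneg) (fun k => ?_)
      (by simpa using hUd.add ea)
    calc Metric.infDist (x k) {y | U y = y}
        ≤ Metric.infDist (T (x k)) {y | U y = y} + dist (x k) (T (x k)) :=
          Metric.infDist_le_infDist_add_dist
      _ = Metric.infDist (T (x k)) {y | U y = y} + ‖T (x k) - x k‖ := by
          rw [dist_eq_norm, norm_sub_rev]
  have hmax : Tendsto (fun k => max (Metric.infDist (x k) {y | T y = y})
      (Metric.infDist (x k) {y | U y = y})) atTop (nhds 0) := by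
    simpa using hTd.max hUd'
  have hcap := hpair x hx hmax
  have hsub : {y | T y = y} ∩ {y | U y = y} ⊆ {y | (U ∘ T) y = y} := by
    rintro y ⟨hy1, hy2⟩
    simp only [Set.mem_setOf_eq, Function.comp_apply] at *
    rw [hy1, hy2]
  refine squeeze_zero (fun k => Metric.infDist_nonneg) (fun k => ?_) hcap
  exact Metric.infDist_le_infDist_of_subset hsub ⟨z, hzT, hzU⟩
end

section
/- Let T, U : H → H be λ- and μ-relaxed cutters with λ, μ > 0, λμ < 4 and Fix T ∩ Fix U ≠ ∅. Let z ∈ Fix T ∩ Fix U, r > 0, R := max{r, (λ−1)r}, and suppose T is δ₁-linearly regular over B(z, r), U is δ₂-linearly regular over B(z, R), and {Fix T, Fix U} is κ-linearly regular over B(z, r), where δ₁, δ₂ ∈ (0,1] and κ > 0. Then UT is δ-linearly regular over B(z, r) with δ := (|α| min{δ₁, δ₂} / (2κ(1 + β√ν)))², where ν := 4(λ + μ − λμ)/(4 − λμ), α := √(1/λ − 1/ν) − √(1/μ − 1/ν), β := max{√(1/λ − 1/ν), √(1/μ − 1/ν)}. -/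
open RealInnerProductSpace

/-- `V` is `δ`-linearly regular over `S`: `‖V x - x‖ ≥ δ · d(x, Fix V)` for all `x ∈ S`. -/
def LinearlyRegularOver {H : Type*} [NormedAddCommGroup H] [InnerProductSpace ℝ H]
    (V : H → H) (δ : ℝ) (S : Set H) : Prop :=
  ∀ x ∈ S, ‖V x - x‖ ≥ δ * Metric.infDist x {y | V y = y}

/-- The pair `{A, B}` is `κ`-linearly regular over `S`:
`d(x, A ∩ B) ≤ κ · max {d(x, A), d(x, B)}` for all `x ∈ S`. -/
def PairLinearlyRegularOver {H : Type*} [NormedAddCommGroup H] [InnerProductSpace ℝ H]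
    (A B : Set H) (κ : ℝ) (S : Set H) : Prop :=
  ∀ x ∈ S, Metric.infDist x (A ∩ B) ≤ κ * max (Metric.infDist x A) (Metric.infDist x B)


private lemma aux_abs_le {a b : ℝ} (hb : 0 ≤ b) (h : a ^ 2 ≤ b ^ 2) : |a| ≤ b := by
  have h1 := Real.sqrt_le_sqrt h
  rwa [Real.sqrt_sq_eq_abs, Real.sqrt_sq hb] at h1

private lemma aux_le_of_sq {a b : ℝ} (ha : 0 ≤ a) (hb : 0 ≤ b) (h : a ^ 2 ≤ b ^ 2) : a ≤ b := by
  have := aux_abs_le hb h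
  rwa [abs_of_nonneg ha] at this

private lemma aux_norm_bd {lam i na nz : ℝ} (hl : 0 < lam) (h : na ^ 2 ≤ lam * i)
    (hi : i ≤ nz * na) (hna : 0 ≤ na) (hnz : 0 ≤ nz) : na ≤ lam * nz := by
  rcases eq_or_lt_of_le hna with h0 | h0
  · rw [← h0]; positivity
  · have h1 : na * na ≤ (lam * nz) * na := by
      have h2 : lam * i ≤ lam * (nz * na) := mul_le_mul_of_nonneg_left hi hl.le
      nlinarith
    exact le_of_mul_le_mul_right h1 h0

private lemma aux_case1 {lam i na nz : ℝ} (hl : 0 < lam) (hl2 : lam ≤ 2)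
    (h : na ^ 2 ≤ lam * i) : na ^ 2 - 2 * i + nz ^ 2 ≤ nz ^ 2 := by
  nlinarith [mul_nonneg (sub_nonneg.2 hl2) (sq_nonneg na)]

private lemma aux_case2 {lam i na nz : ℝ} (hl2 : 2 < lam) (h : na ^ 2 ≤ lam * i)
    (haz : na ≤ lam * nz) (hna : 0 ≤ na) (hnz : 0 ≤ nz) :
    na ^ 2 - 2 * i + nz ^ 2 ≤ (lam - 1) ^ 2 * nz ^ 2 := by
  have h5 : na ^ 2 ≤ lam ^ 2 * nz ^ 2 := by
    nlinarith [mul_self_le_mul_self hna haz]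
  nlinarith [mul_nonneg (by linarith : (0:ℝ) ≤ lam - 2) (by linarith : (0:ℝ) ≤ lam ^ 2 * nz ^ 2 - na ^ 2)]

private lemma aux_sq_R {t u R : ℝ} (hu : 0 ≤ u) (h1 : t ≤ u ^ 2) (h2 : u ≤ R) : t ≤ R ^ 2 := by
  nlinarith
set_option maxHeartbeats 1000000 in
theorem stmt_11 {H : Type*} [NormedAddCommGroup H] [InnerProductSpace ℝ H]
    (T U : H → H) (lam mu : ℝ) (hlam : 0 < lam) (hmu : 0 < mu)
    (hT : IsRelaxedCutter T lam) (hU : IsRelaxedCutter U mu)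
    (h4 : lam * mu < 4) (z : H) (hzT : T z = z) (hzU : U z = z)
    (r R : ℝ) (hr : 0 < r) (hR : R = max r ((lam - 1) * r))
    (δ₁ δ₂ κ : ℝ) (hδ₁ : δ₁ ∈ Set.Ioc (0 : ℝ) 1) (hδ₂ : δ₂ ∈ Set.Ioc (0 : ℝ) 1)
    (hκ : 0 < κ)
    (hTreg : LinearlyRegularOver T δ₁ (Metric.closedBall z r))
    (hUreg : LinearlyRegularOver U δ₂ (Metric.closedBall z R))
    (hpair : PairLinearlyRegularOver {y | T y = y} {y | U y = y} κ (Metric.closedBall z r))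
    (nu alpha beta δ : ℝ)
    (hnu : nu = 4 * (lam + mu - lam * mu) / (4 - lam * mu))
    (halpha : alpha = Real.sqrt (1 / lam - 1 / nu) - Real.sqrt (1 / mu - 1 / nu))
    (hbeta : beta = max (Real.sqrt (1 / lam - 1 / nu)) (Real.sqrt (1 / mu - 1 / nu)))
    (hδ : δ = (|alpha| * min δ₁ δ₂ / (2 * κ * (1 + beta * Real.sqrt nu))) ^ 2) :
    LinearlyRegularOver (U ∘ T) δ (Metric.closedBall z r) := by
  obtain ⟨hδ₁0, hδ₁1⟩ := hδ₁
  obtain ⟨hδ₂0, hδ₂1⟩ := hδ₂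
  have hA : 0 < 4 - lam * mu := by linarith
  have hB : 0 < lam + mu - lam * mu := by
    nlinarith [sq_nonneg (lam + mu), sq_nonneg (lam - mu), mul_pos hlam hmu]
  have hnu0 : 0 < nu := by rw [hnu]; positivity
  set p : ℝ := 1 / lam - 1 / nu with hp_def
  set q : ℝ := 1 / mu - 1 / nu with hq_def
  have hlamnu : lam ≤ nu := by
    rw [hnu, le_div_iff₀ hA]; nlinarith [sq_nonneg (2 - lam), hmu.le]
  have hmunu : mu ≤ nu := by
    rw [hnu, le_div_iff₀ hA]; nlinarith [sq_nonneg (2 - mu), hlam.le]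
  have hp0 : 0 ≤ p := by
    rw [hp_def, sub_nonneg]
    exact one_div_le_one_div_of_le hlam hlamnu
  have hq0 : 0 ≤ q := by
    rw [hq_def, sub_nonneg]
    exact one_div_le_one_div_of_le hmu hmunu
  have hkey : 4 * (p * q) = (1 - 2 / nu) ^ 2 := by
    rw [hp_def, hq_def, hnu]
    field_simp
    ring
  set sp : ℝ := Real.sqrt p with hsp_def
  set sq' : ℝ := Real.sqrt q with hsq_def
  have hsp0 : 0 ≤ sp := Real.sqrt_nonneg _
  have hsq0 : 0 ≤ sq' := Real.sqrt_nonneg _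
  have hsp2 : sp ^ 2 = p := Real.sq_sqrt hp0
  have hsq2 : sq' ^ 2 = q := Real.sq_sqrt hq0
  have hspq : 2 * (sp * sq') = |1 - 2 / nu| := by
    have h1 : sp * sq' = Real.sqrt (p * q) := (Real.sqrt_mul hp0 q).symm
    have h2 : p * q = ((1 - 2 / nu) / 2) ^ 2 := by linear_combination hkey / 4
    rw [h1, h2, Real.sqrt_sq_eq_abs, abs_div]
    rw [abs_of_pos (by norm_num : (0:ℝ) < 2)]
    ring
  have hαsp : alpha = sp - sq' := by rw [halpha, hsp_def, hsq_def, hp_def, hq_def]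
  have hβsp : beta = max sp sq' := by rw [hbeta, hsp_def, hsq_def, hp_def, hq_def]
  have hβ0 : 0 ≤ beta := by rw [hβsp]; exact le_max_of_le_left hsp0
  have hsν0 : 0 ≤ Real.sqrt nu := Real.sqrt_nonneg _
  have hC0 : 0 < 2 * κ * (1 + beta * Real.sqrt nu) := by positivity
  have hδ0 : 0 ≤ δ := by rw [hδ]; positivity
  have hδm0 : 0 < min δ₁ δ₂ := lt_min hδ₁0 hδ₂0
  -- enter the main proof
  intro x hx
  set a : H := T x - x with ha_def
  set b : H := U (T x) - T x with hb_def
  have hc_eq : (U ∘ T) x - x = a + b := by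
    simp only [Function.comp_apply, ha_def, hb_def]; abel
  set c : H := a + b with hc_def
  rw [hc_eq]
  set S : Set H := {y | T y = y} ∩ {y | U y = y} with hS_def
  have hzS : z ∈ S := ⟨hzT, hzU⟩
  have hSsub : S ⊆ {y | (U ∘ T) y = y} := by
    rintro y ⟨hy1, hy2⟩
    simp only [Set.mem_setOf_eq, Function.comp_apply] at *
    rw [hy1, hy2]
  set D : ℝ := Metric.infDist x S with hD_def
  have hD0 : 0 ≤ D := Metric.infDist_nonneg
  have hdleD : Metric.infDist x {y | (U ∘ T) y = y} ≤ D :=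
    Metric.infDist_le_infDist_of_subset hSsub ⟨z, hzS⟩
  -- a bound : T x lies in the ball of radius R
  have hxz : ‖z - x‖ ≤ r := by
    rw [← dist_eq_norm, dist_comm]
    exact Metric.mem_closedBall.mp hx
  have hTz : lam * ⟪z - x, a⟫ ≥ ‖a‖ ^ 2 := hT.2 x z hzT
  have hinner_za : ⟪z - x, a⟫ ≤ ‖z - x‖ * ‖a‖ := real_inner_le_norm _ _
  have haz : ‖a‖ ≤ lam * ‖z - x‖ :=
    aux_norm_bd hlam hTz hinner_za (norm_nonneg a) (norm_nonneg (z - x))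
  have hrR : r ≤ R := by rw [hR]; exact le_max_left _ _
  have hR0 : 0 ≤ R := le_trans hr.le hrR
  have hTxball : T x ∈ Metric.closedBall z R := by
    have hexp : ‖T x - z‖ ^ 2 = ‖a‖ ^ 2 - 2 * ⟪a, z - x⟫ + ‖z - x‖ ^ 2 := by
      have : T x - z = a - (z - x) := by rw [ha_def]; abel
      rw [this, norm_sub_sq_real]
    have hsymm : ⟪a, z - x⟫ = ⟪z - x, a⟫ := real_inner_comm _ _
    have hsq : ‖T x - z‖ ^ 2 ≤ R ^ 2 := by
      rcases le_or_gt lam 2 with hl2 | hl2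
      · have h1 : ‖T x - z‖ ^ 2 ≤ ‖z - x‖ ^ 2 := by
          rw [hexp, hsymm]; exact aux_case1 hlam hl2 hTz
        exact aux_sq_R (norm_nonneg (z - x)) h1 (le_trans hxz hrR)
      · have hL : (lam - 1) * r ≤ R := by rw [hR]; exact le_max_right _ _
        have h1 : ‖T x - z‖ ^ 2 ≤ (lam - 1) ^ 2 * ‖z - x‖ ^ 2 := by
          rw [hexp, hsymm]
          exact aux_case2 hl2 hTz haz (norm_nonneg a) (norm_nonneg (z - x))
        have h1' : ‖T x - z‖ ^ 2 ≤ ((lam - 1) * ‖z - x‖) ^ 2 := by rw [mul_pow]; exact h1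
        have h2 : (lam - 1) * ‖z - x‖ ≤ R := by
          have := mul_le_mul_of_nonneg_left hxz (by linarith : (0:ℝ) ≤ lam - 1)
          linarith
        exact aux_sq_R (mul_nonneg (by linarith : (0:ℝ) ≤ lam - 1) (norm_nonneg (z - x))) h1' h2
    rw [Metric.mem_closedBall, dist_eq_norm]
    exact aux_le_of_sq (norm_nonneg (T x - z)) hR0 hsq
  -- regularity bounds
  have hTa : ‖a‖ ≥ δ₁ * Metric.infDist x {y | T y = y} := hTreg x hx
  have hUb : ‖b‖ ≥ δ₂ * Metric.infDist (T x) {y | U y = y} := hUreg (T x) hTxball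
  have hdU : Metric.infDist x {y | U y = y} ≤
      Metric.infDist (T x) {y | U y = y} + ‖a‖ := by
    have := Metric.infDist_le_infDist_add_dist (s := {y | U y = y}) (x := x) (y := T x)
    have hd : dist x (T x) = ‖a‖ := by rw [dist_eq_norm, ha_def, ← norm_neg]; congr 1; abel
    linarith [this, hd.le, hd.ge]
  set M : ℝ := max ‖a‖ ‖b‖ with hM_def
  have hM0 : 0 ≤ M := le_max_of_le_left (norm_nonneg a)
  have haM : ‖a‖ ≤ M := le_max_left _ _
  have hbM : ‖b‖ ≤ M := le_max_right _ _
  set δm : ℝ := min δ₁ δ₂ with hδm_def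
  have hδm1 : δm ≤ 1 := le_trans (min_le_left _ _) hδ₁1
  have hMD : δm * D ≤ 2 * κ * M := by
    have hpx := hpair x hx
    have hdT0 : 0 ≤ Metric.infDist x {y | T y = y} := Metric.infDist_nonneg
    have hdU0 : 0 ≤ Metric.infDist (T x) {y | U y = y} := Metric.infDist_nonneg
    have h1 : δm * Metric.infDist x {y | T y = y} ≤ 2 * M := by
      have h1a := mul_le_mul_of_nonneg_right (min_le_left δ₁ δ₂) hdT0
      linarith
    have h2 : δm * Metric.infDist x {y | U y = y} ≤ 2 * M := by
      have hm2 : δm * Metric.infDist (T x) {y | U y = y} ≤ ‖b‖ := by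
        have h2a := mul_le_mul_of_nonneg_right (min_le_right δ₁ δ₂) hdU0
        linarith
      have h2b := mul_le_mul_of_nonneg_left hdU hδm0.le
      have h2c : δm * (Metric.infDist (T x) {y | U y = y} + ‖a‖)
          = δm * Metric.infDist (T x) {y | U y = y} + δm * ‖a‖ := by ring
      have h2d : δm * ‖a‖ ≤ 1 * ‖a‖ := mul_le_mul_of_nonneg_right hδm1 (norm_nonneg a)
      linarith
    have h3 : δm * max (Metric.infDist x {y | T y = y}) (Metric.infDist x {y | U y = y}) ≤ 2 * M := by
      rcases max_cases (Metric.infDist x {y | T y = y}) (Metric.infDist x {y | U y = y}) with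
        ⟨h, _⟩ | ⟨h, _⟩ <;> rw [h] <;> [exact h1; exact h2]
    calc δm * D ≤ δm * (κ * max (Metric.infDist x {y | T y = y}) (Metric.infDist x {y | U y = y})) :=
          mul_le_mul_of_nonneg_left hpx hδm0.le
      _ = κ * (δm * max (Metric.infDist x {y | T y = y}) (Metric.infDist x {y | U y = y})) := by ring
      _ ≤ κ * (2 * M) := mul_le_mul_of_nonneg_left h3 hκ.le
      _ = 2 * κ * M := by ring
  -- the key estimate, with an ε-approximate projection onto S
  have key : ∀ ε > 0, δ * D ^ 2 ≤ ‖c‖ * (D + ε) := by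
    intro ε hε
    obtain ⟨z', hz'S, hz'd⟩ : ∃ z' ∈ S, dist x z' < D + ε := by
      refine (Metric.infDist_lt_iff ⟨z, hzS⟩).mp ?_
      rw [← hD_def]; linarith
    set w : H := z' - x with hw_def
    have hwd : ‖w‖ ≤ D + ε := by
      rw [hw_def, ← dist_eq_norm, dist_comm]; exact hz'd.le
    have hw0 : 0 ≤ ‖w‖ := norm_nonneg _
    have hc0 : 0 ≤ ‖c‖ := norm_nonneg _
    have hc1 : lam * ⟪w, a⟫ ≥ ‖a‖ ^ 2 := hT.2 x z' hz'S.1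
    have hc2 : mu * ⟪w - a, b⟫ ≥ ‖b‖ ^ 2 := by
      have := hU.2 (T x) z' hz'S.2
      have hwa : z' - T x = w - a := by rw [hw_def, ha_def]; abel
      rwa [hwa] at this
    have hinner : ⟪w, c⟫ ≥ ‖a‖ ^ 2 / lam + ‖b‖ ^ 2 / mu + ⟪a, b⟫ := by
      have e1 : ⟪w, c⟫ = ⟪w, a⟫ + ⟪w, b⟫ := by rw [hc_def, inner_add_right]
      have e2 : ⟪w - a, b⟫ = ⟪w, b⟫ - ⟪a, b⟫ := by rw [inner_sub_left]
      have d1 : ‖a‖ ^ 2 / lam ≤ ⟪w, a⟫ := by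
        rw [div_le_iff₀ hlam]; linarith [hc1]
      have d2 : ‖b‖ ^ 2 / mu ≤ ⟪w - a, b⟫ := by
        rw [div_le_iff₀ hmu]; linarith [hc2]
      rw [e1]; rw [e2] at d2; linarith
    set Q : ℝ := p * ‖a‖ ^ 2 + q * ‖b‖ ^ 2 + (1 - 2 / nu) * ⟪a, b⟫ with hQ_def
    have hQge : (sp * ‖a‖ - sq' * ‖b‖) ^ 2 ≤ Q := by
      have habs : |⟪a, b⟫| ≤ ‖a‖ * ‖b‖ := abs_real_inner_le_norm a b
      have h1 : (1 - 2 / nu) * ⟪a, b⟫ ≥ -(|1 - 2 / nu| * (‖a‖ * ‖b‖)) := by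
        have := neg_abs_le ((1 - 2 / nu) * ⟪a, b⟫)
        have h2 : |(1 - 2 / nu) * ⟪a, b⟫| ≤ |1 - 2 / nu| * (‖a‖ * ‖b‖) := by
          rw [abs_mul]
          exact mul_le_mul_of_nonneg_left habs (abs_nonneg _)
        linarith
      have hexp : (sp * ‖a‖ - sq' * ‖b‖) ^ 2
          = p * ‖a‖ ^ 2 + q * ‖b‖ ^ 2 - 2 * (sp * sq') * (‖a‖ * ‖b‖) := by
        rw [← hsp2, ← hsq2]; ring
      rw [hexp, hQ_def, hspq]; linarith
    have hQle : Q + (1 / nu) * ‖c‖ ^ 2 ≤ ⟪w, c⟫ := by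
      have hcsq : ‖c‖ ^ 2 = ‖a‖ ^ 2 + 2 * ⟪a, b⟫ + ‖b‖ ^ 2 := by
        rw [hc_def]; exact norm_add_sq_real a b
      have hpl : p + 1 / nu = 1 / lam := by rw [hp_def]; ring
      have hql : q + 1 / nu = 1 / mu := by rw [hq_def]; ring
      have e1 : Q + (1 / nu) * ‖c‖ ^ 2
          = (p + 1 / nu) * ‖a‖ ^ 2 + (q + 1 / nu) * ‖b‖ ^ 2 + ⟪a, b⟫ := by
        rw [hQ_def, hcsq]; ring
      rw [e1, hpl, hql]
      have e2 : 1 / lam * ‖a‖ ^ 2 = ‖a‖ ^ 2 / lam := by ring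
      have e3 : 1 / mu * ‖b‖ ^ 2 = ‖b‖ ^ 2 / mu := by ring
      rw [e2, e3]; linarith [hinner]
    have hwc : ⟪w, c⟫ ≤ ‖w‖ * ‖c‖ := real_inner_le_norm w c
    have hQ0 : 0 ≤ Q := le_trans (sq_nonneg _) hQge
    have hcc0 : 0 ≤ 1 / nu * ‖c‖ ^ 2 := by positivity
    have hcν : ‖c‖ ^ 2 ≤ nu * (‖w‖ * ‖c‖) := by
      have h1 : (1 / nu) * ‖c‖ ^ 2 ≤ ‖w‖ * ‖c‖ := by
        have t := le_trans hQle hwc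
        calc (1 / nu) * ‖c‖ ^ 2 ≤ Q + 1 / nu * ‖c‖ ^ 2 := le_add_of_nonneg_left hQ0
          _ ≤ ‖w‖ * ‖c‖ := t
      calc ‖c‖ ^ 2 = nu * ((1 / nu) * ‖c‖ ^ 2) := by field_simp
        _ ≤ nu * (‖w‖ * ‖c‖) := mul_le_mul_of_nonneg_left h1 hnu0.le
    set s : ℝ := Real.sqrt (‖w‖ * ‖c‖) with hs_def
    have hs0 : 0 ≤ s := Real.sqrt_nonneg _
    have hs2 : s ^ 2 = ‖w‖ * ‖c‖ := Real.sq_sqrt (mul_nonneg hw0 hc0)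
    have hsqb : (sp * ‖a‖ - sq' * ‖b‖) ^ 2 ≤ s ^ 2 := by
      rw [hs2]
      have t := le_trans hQle hwc
      calc (sp * ‖a‖ - sq' * ‖b‖) ^ 2 ≤ Q := hQge
        _ ≤ Q + 1 / nu * ‖c‖ ^ 2 := le_add_of_nonneg_right hcc0
        _ ≤ ‖w‖ * ‖c‖ := t
    have h1 : |sp * ‖a‖ - sq' * ‖b‖| ≤ s := aux_abs_le hs0 hsqb
    have h2 : ‖c‖ ≤ Real.sqrt nu * s := by
      have hν2 : (Real.sqrt nu) ^ 2 = nu := Real.sq_sqrt hnu0.le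
      refine aux_le_of_sq hc0 (mul_nonneg hsν0 hs0) ?_
      have he : (Real.sqrt nu * s) ^ 2 = nu * (‖w‖ * ‖c‖) := by
        rw [mul_pow, hν2, hs2]
      rw [he]; exact hcν
    have habsn : |‖a‖ - ‖b‖| ≤ ‖c‖ := by
      have := abs_norm_sub_norm_le a (-b)
      simpa [hc_def, sub_neg_eq_add] using this
    have h3 : |alpha| * M ≤ (1 + beta * Real.sqrt nu) * s := by
      have hspβ : sp ≤ beta := by rw [hβsp]; exact le_max_left _ _
      have hsqβ : sq' ≤ beta := by rw [hβsp]; exact le_max_right _ _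
      have habs0 : 0 ≤ |‖a‖ - ‖b‖| := abs_nonneg _
      have hmain : ∀ t : H, (alpha * ‖t‖ = (sp * ‖a‖ - sq' * ‖b‖) - sq' * (‖a‖ - ‖b‖) ∨
          alpha * ‖t‖ = (sp * ‖a‖ - sq' * ‖b‖) - sp * (‖a‖ - ‖b‖)) → |alpha| * ‖t‖ ≤
          |sp * ‖a‖ - sq' * ‖b‖| + beta * |‖a‖ - ‖b‖| := by
        intro t ht
        have habs : |alpha| * ‖t‖ = |alpha * ‖t‖| := by
          rw [abs_mul, abs_norm]
        rcases ht with ht | ht <;> rw [habs, ht]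
        · calc |(sp * ‖a‖ - sq' * ‖b‖) - sq' * (‖a‖ - ‖b‖)|
              ≤ |sp * ‖a‖ - sq' * ‖b‖| + |sq' * (‖a‖ - ‖b‖)| := abs_sub _ _
            _ ≤ |sp * ‖a‖ - sq' * ‖b‖| + beta * |‖a‖ - ‖b‖| := by
                rw [abs_mul, abs_of_nonneg hsq0]
                have := mul_le_mul_of_nonneg_right hsqβ habs0
                linarith
        · calc |(sp * ‖a‖ - sq' * ‖b‖) - sp * (‖a‖ - ‖b‖)|
              ≤ |sp * ‖a‖ - sq' * ‖b‖| + |sp * (‖a‖ - ‖b‖)| := abs_sub _ _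
            _ ≤ |sp * ‖a‖ - sq' * ‖b‖| + beta * |‖a‖ - ‖b‖| := by
                rw [abs_mul, abs_of_nonneg hsp0]
                have := mul_le_mul_of_nonneg_right hspβ habs0
                linarith
      have ha' : |alpha| * ‖a‖ ≤ |sp * ‖a‖ - sq' * ‖b‖| + beta * |‖a‖ - ‖b‖| := by
        apply hmain a; left; rw [hαsp]; ring
      have hb' : |alpha| * ‖b‖ ≤ |sp * ‖a‖ - sq' * ‖b‖| + beta * |‖a‖ - ‖b‖| := by
        apply hmain b; right; rw [hαsp]; ring
      have hM' : |alpha| * M ≤ |sp * ‖a‖ - sq' * ‖b‖| + beta * |‖a‖ - ‖b‖| := by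
        rcases max_cases ‖a‖ ‖b‖ with ⟨h, _⟩ | ⟨h, _⟩ <;> rw [hM_def, h] <;>
          [exact ha'; exact hb']
      have hβc : beta * |‖a‖ - ‖b‖| ≤ beta * (Real.sqrt nu * s) :=
        mul_le_mul_of_nonneg_left (le_trans habsn h2) hβ0
      calc |alpha| * M ≤ |sp * ‖a‖ - sq' * ‖b‖| + beta * |‖a‖ - ‖b‖| := hM'
        _ ≤ s + beta * (Real.sqrt nu * s) := add_le_add h1 hβc
        _ = (1 + beta * Real.sqrt nu) * s := by ring
    -- square and combine
    have e2 : (|alpha| * M) ^ 2 ≤ (1 + beta * Real.sqrt nu) ^ 2 * (‖w‖ * ‖c‖) := by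
      have := pow_le_pow_left₀ (mul_nonneg (abs_nonneg alpha) hM0) h3 2
      calc (|alpha| * M) ^ 2 ≤ ((1 + beta * Real.sqrt nu) * s) ^ 2 := this
        _ = (1 + beta * Real.sqrt nu) ^ 2 * s ^ 2 := by ring
        _ = (1 + beta * Real.sqrt nu) ^ 2 * (‖w‖ * ‖c‖) := by rw [hs2]
    have e1 : (δm * D) ^ 2 ≤ (2 * κ * M) ^ 2 :=
      pow_le_pow_left₀ (mul_nonneg hδm0.le hD0) hMD 2
    have e3 : ‖w‖ * ‖c‖ ≤ (D + ε) * ‖c‖ := mul_le_mul_of_nonneg_right hwd hc0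
    -- δ * D^2 ≤ ‖c‖ * (D + ε)
    rw [hδ]
    rw [div_pow, div_mul_eq_mul_div, div_le_iff₀ (by positivity)]
    have hcomb : (|alpha| * δm) ^ 2 * D ^ 2 ≤
        (2 * κ) ^ 2 * ((1 + beta * Real.sqrt nu) ^ 2 * ((D + ε) * ‖c‖)) := by
      have t1 : alpha ^ 2 * (δm * D) ^ 2 ≤ alpha ^ 2 * (2 * κ * M) ^ 2 :=
        mul_le_mul_of_nonneg_left e1 (sq_nonneg alpha)
      have t2 : (2 * κ) ^ 2 * ((|alpha| * M) ^ 2) ≤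
          (2 * κ) ^ 2 * ((1 + beta * Real.sqrt nu) ^ 2 * (‖w‖ * ‖c‖)) :=
        mul_le_mul_of_nonneg_left e2 (sq_nonneg _)
      have t3 : (2 * κ) ^ 2 * ((1 + beta * Real.sqrt nu) ^ 2 * (‖w‖ * ‖c‖)) ≤
          (2 * κ) ^ 2 * ((1 + beta * Real.sqrt nu) ^ 2 * ((D + ε) * ‖c‖)) := by
        apply mul_le_mul_of_nonneg_left _ (sq_nonneg _)
        exact mul_le_mul_of_nonneg_left e3 (sq_nonneg _)
      calc (|alpha| * δm) ^ 2 * D ^ 2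
          = alpha ^ 2 * (δm * D) ^ 2 := by
            linear_combination (δm ^ 2 * D ^ 2) * sq_abs alpha
        _ ≤ alpha ^ 2 * (2 * κ * M) ^ 2 := t1
        _ = (2 * κ) ^ 2 * ((|alpha| * M) ^ 2) := by
            linear_combination (-(4 * κ ^ 2 * M ^ 2)) * sq_abs alpha
        _ ≤ (2 * κ) ^ 2 * ((1 + beta * Real.sqrt nu) ^ 2 * (‖w‖ * ‖c‖)) := t2
        _ ≤ (2 * κ) ^ 2 * ((1 + beta * Real.sqrt nu) ^ 2 * ((D + ε) * ‖c‖)) := t3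
    calc (|alpha| * δm) ^ 2 * D ^ 2
        ≤ (2 * κ) ^ 2 * ((1 + beta * Real.sqrt nu) ^ 2 * ((D + ε) * ‖c‖)) := hcomb
      _ = ‖c‖ * (D + ε) * (2 * κ * (1 + beta * Real.sqrt nu)) ^ 2 := by ring
  -- pass to the limit ε → 0
  have hc0 : 0 ≤ ‖c‖ := norm_nonneg _
  have hD2 : δ * D ^ 2 ≤ ‖c‖ * D := by
    refine le_of_forall_pos_le_add fun ε hε => ?_
    have hε' : 0 < ε / (‖c‖ + 1) := by positivity
    have := key _ hε'
    have h1 : ‖c‖ * (ε / (‖c‖ + 1)) ≤ ε := by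
      rw [mul_div_assoc']
      rw [div_le_iff₀ (by positivity)]
      have hee : ε * (‖c‖ + 1) = ‖c‖ * ε + ε := by ring
      linarith
    have hexpand : ‖c‖ * (D + ε / (‖c‖ + 1)) = ‖c‖ * D + ‖c‖ * (ε / (‖c‖ + 1)) := by ring
    linarith
  -- conclude
  rcases eq_or_lt_of_le hD0 with hD0' | hDpos
  · have hd0 : Metric.infDist x {y | (U ∘ T) y = y} = 0 :=
      le_antisymm (by rw [← hD0'] at hdleD; exact hdleD) Metric.infDist_nonneg
    rw [ge_iff_le, hd0, mul_zero]
    exact hc0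
  · have hδD : δ * D ≤ ‖c‖ := by
      have : (δ * D) * D ≤ ‖c‖ * D := by
        have he : δ * D ^ 2 = (δ * D) * D := by ring
        linarith
      exact le_of_mul_le_mul_right this hDpos
    have : δ * Metric.infDist x {y | (U ∘ T) y = y} ≤ δ * D :=
      mul_le_mul_of_nonneg_left hdleD hδ0
    exact le_trans this hδD
end

section
/- Let T, U : H → H be λ- and μ-relaxed cutters with λ, μ > 0, λμ < 4, Fix T ∩ Fix U ≠ ∅, and ν := 4(λ + μ − λμ)/(4 − λμ). Define x^{k+1} := x^k + (α_k/ν)(UT(x^k) − x^k) with α_k ∈ [ε, 2 − ε], ε > 0. Then for every w ∈ Fix T ∩ Fix U and every k, ‖x^k − w‖² − ‖x^{k+1} − w‖² ≥ (ε/ν)²‖UT(x^k) − x^k‖²; in particular the sequence (x^k) is Fejér monotone with respect to Fix T ∩ Fix U and ‖UT(x^k) − x^k‖ → 0. -/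
open RealInnerProductSpace Filter

private lemma aux_nonneg {c X : ℝ} (hc : 0 < c) (h : 0 ≤ c * X) : 0 ≤ X :=
  le_of_mul_le_mul_left (by linarith) hc

private lemma alg_core (lam mu nu p q s a b : ℝ) (hlam : 0 < lam) (hmu : 0 < mu)
    (hD : 0 < 4 - lam * mu) (hnu0 : 0 < nu)
    (hnuD : nu * (4 - lam * mu) = 4 * (lam + mu - lam * mu))
    (h1 : lam * a ≥ p ^ 2) (h2 : mu * (b - s) ≥ q ^ 2)
    (hcs1 : s ≤ p * q) (hcs2 : -(p * q) ≤ s) :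
    nu * (a + b) ≥ p ^ 2 + 2 * s + q ^ 2 := by
  have hpoly : mu ^ 2 * (2 - lam) ^ 2 * p ^ 2 + lam ^ 2 * (2 - mu) ^ 2 * q ^ 2
      - 2 * (lam * mu * ((2 - lam) * (2 - mu))) * s ≥ 0 := by
    rcases le_or_gt 0 ((2 - lam) * (2 - mu)) with h | h
    · have hc : 0 ≤ lam * mu * ((2 - lam) * (2 - mu)) :=
        mul_nonneg (by positivity) h
      nlinarith [sq_nonneg (mu * (2 - lam) * p - lam * (2 - mu) * q),
        mul_nonneg hc (by linarith : (0:ℝ) ≤ p * q - s)]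
    · have hc : 0 ≤ -(lam * mu * ((2 - lam) * (2 - mu))) := by
        have := mul_pos hlam hmu; nlinarith
      nlinarith [sq_nonneg (mu * (2 - lam) * p + lam * (2 - mu) * q),
        mul_nonneg hc (by linarith : (0:ℝ) ≤ p * q + s)]
  have f1 : 0 ≤ nu * mu * (4 - lam * mu) * (lam * a - p ^ 2) :=
    mul_nonneg (by positivity) (by linarith)
  have f2 : 0 ≤ nu * lam * (4 - lam * mu) * (mu * (b - s) - q ^ 2) :=
    mul_nonneg (by positivity) (by linarith)
  have e : lam * mu * (4 - lam * mu) * (nu * (a + b) - (p ^ 2 + 2 * s + q ^ 2)) =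
      nu * mu * (4 - lam * mu) * (lam * a - p ^ 2)
      + nu * lam * (4 - lam * mu) * (mu * (b - s) - q ^ 2)
      + (mu ^ 2 * (2 - lam) ^ 2 * p ^ 2 + lam ^ 2 * (2 - mu) ^ 2 * q ^ 2
        - 2 * (lam * mu * ((2 - lam) * (2 - mu))) * s) := by
    linear_combination (mu * p ^ 2 + lam * q ^ 2 + lam * mu * s) * hnuD
  have G' : 0 ≤ lam * mu * (4 - lam * mu) * (nu * (a + b) - (p ^ 2 + 2 * s + q ^ 2)) := by
    rw [e]; linarith
  have := aux_nonneg (by positivity : 0 < lam * mu * (4 - lam * mu)) G'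
  linarith

private lemma comp_key {H : Type*} [NormedAddCommGroup H] [InnerProductSpace ℝ H]
    (T U : H → H) (lam mu nu : ℝ) (hlam : 0 < lam) (hmu : 0 < mu)
    (hD : 0 < 4 - lam * mu) (hnu0 : 0 < nu)
    (hnuD : nu * (4 - lam * mu) = 4 * (lam + mu - lam * mu))
    (hT : ∀ x z, T z = z → lam * ⟪z - x, T x - x⟫ ≥ ‖T x - x‖ ^ 2)
    (hU : ∀ x z, U z = z → mu * ⟪z - x, U x - x⟫ ≥ ‖U x - x‖ ^ 2)
    (x w : H) (hwT : T w = w) (hwU : U w = w) :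
    nu * ⟪w - x, U (T x) - x⟫ ≥ ‖U (T x) - x‖ ^ 2 := by
  set u := T x - x with hu
  set v := U (T x) - T x with hv
  have hdec : U (T x) - x = u + v := by rw [hu, hv]; abel
  have h1 : lam * ⟪w - x, u⟫ ≥ ‖u‖ ^ 2 := hT x w hwT
  have h2 : mu * ⟪w - T x, v⟫ ≥ ‖v‖ ^ 2 := hU (T x) w hwU
  have hwt : w - T x = (w - x) - u := by rw [hu]; abel
  have h2' : mu * (⟪w - x, v⟫ - ⟪u, v⟫) ≥ ‖v‖ ^ 2 := by
    rwa [hwt, inner_sub_left] at h2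
  have hcs := abs_real_inner_le_norm u v
  rw [abs_le] at hcs
  have hnorm : ‖u + v‖ ^ 2 = ‖u‖ ^ 2 + 2 * ⟪u, v⟫ + ‖v‖ ^ 2 := norm_add_sq_real u v
  rw [hdec, hnorm, inner_add_right]
  have := alg_core lam mu nu ‖u‖ ‖v‖ ⟪u, v⟫ ⟪w - x, u⟫ ⟪w - x, v⟫
    hlam hmu hD hnu0 hnuD h1 h2' hcs.2 hcs.1
  linarith

theorem stmt_12 {H : Type*} [NormedAddCommGroup H] [InnerProductSpace ℝ H]
    (T U : H → H) (lam mu : ℝ) (hlam : 0 < lam) (hmu : 0 < mu)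
    (hT : IsRelaxedCutter T lam) (hU : IsRelaxedCutter U mu)
    (h4 : lam * mu < 4) (hfix : ({x | T x = x} ∩ {x | U x = x}).Nonempty)
    (nu : ℝ) (hnu : nu = 4 * (lam + mu - lam * mu) / (4 - lam * mu))
    (ε : ℝ) (hε : 0 < ε) (α : ℕ → ℝ) (hα : ∀ k, α k ∈ Set.Icc ε (2 - ε))
    (x : ℕ → H)
    (hrec : ∀ k, x (k + 1) = x k + (α k / nu) • (U (T (x k)) - x k)) :
    (∀ w ∈ {y | T y = y} ∩ {y | U y = y}, ∀ k,
      ‖x k - w‖ ^ 2 - ‖x (k + 1) - w‖ ^ 2 ≥ (ε / nu) ^ 2 * ‖U (T (x k)) - x k‖ ^ 2) ∧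
    (∀ w ∈ {y | T y = y} ∩ {y | U y = y}, ∀ k, ‖x (k + 1) - w‖ ≤ ‖x k - w‖) ∧
    Tendsto (fun k => ‖U (T (x k)) - x k‖) atTop (nhds 0) := by
  have hD : 0 < 4 - lam * mu := by linarith
  have hsum : 0 < lam + mu - lam * mu := by
    nlinarith [sq_nonneg (lam - mu), mul_pos hlam hmu]
  have hnu0 : 0 < nu := by rw [hnu]; positivity
  have hnuD : nu * (4 - lam * mu) = 4 * (lam + mu - lam * mu) := by
    rw [hnu]; field_simp
  have hε1 : ε ≤ 1 := by have := hα 0; obtain ⟨h1, h2⟩ := this; linarith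
  -- part 1
  have part1 : ∀ w ∈ {y | T y = y} ∩ {y | U y = y}, ∀ k,
      ‖x k - w‖ ^ 2 - ‖x (k + 1) - w‖ ^ 2 ≥ (ε / nu) ^ 2 * ‖U (T (x k)) - x k‖ ^ 2 := by
    rintro w ⟨hwT, hwU⟩ k
    set d := U (T (x k)) - x k with hd
    have hkey : nu * ⟪w - x k, d⟫ ≥ ‖d‖ ^ 2 :=
      comp_key T U lam mu nu hlam hmu hD hnu0 hnuD hT.2 hU.2 (x k) w hwT hwU
    have hxd : x (k + 1) - w = (x k - w) + (α k / nu) • d := by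
      rw [hrec k]; abel
    have hexp : ‖x (k + 1) - w‖ ^ 2 = ‖x k - w‖ ^ 2
        + 2 * ((α k / nu) * ⟪x k - w, d⟫) + (α k / nu) ^ 2 * ‖d‖ ^ 2 := by
      rw [hxd, norm_add_sq_real, real_inner_smul_right, norm_smul,
        Real.norm_eq_abs, mul_pow, sq_abs]
    have hflip : ⟪x k - w, d⟫ = -⟪w - x k, d⟫ := by
      rw [show x k - w = -(w - x k) by abel, inner_neg_left]
    obtain ⟨hα1, hα2⟩ := hα k
    have hαpos : 0 < α k := lt_of_lt_of_le hε hα1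
    set i := ⟪w - x k, d⟫ with hi
    set D2 := ‖d‖ ^ 2 with hD2
    have hD2nn : 0 ≤ D2 := by positivity
    have expand : nu ^ 2 * (2 * (α k / nu) * i - (α k / nu) ^ 2 * D2 - (ε / nu) ^ 2 * D2)
        = 2 * α k * (nu * i) - (α k) ^ 2 * D2 - ε ^ 2 * D2 := by
      field_simp
    have H2 : 0 ≤ nu ^ 2 * (2 * (α k / nu) * i - (α k / nu) ^ 2 * D2 - (ε / nu) ^ 2 * D2) := by
      rw [expand]
      nlinarith [mul_nonneg hαpos.le (by linarith : (0:ℝ) ≤ nu * i - D2),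
        mul_nonneg (mul_nonneg (by linarith : (0:ℝ) ≤ α k - ε)
          (by linarith : (0:ℝ) ≤ 2 - α k - ε)) hD2nn,
        mul_nonneg (mul_nonneg hε.le (by linarith : (0:ℝ) ≤ 1 - ε)) hD2nn]
    have H3 : 0 ≤ 2 * (α k / nu) * i - (α k / nu) ^ 2 * D2 - (ε / nu) ^ 2 * D2 :=
      aux_nonneg (by positivity) H2
    rw [hexp, hflip]
    linarith
  refine ⟨part1, ?_, ?_⟩
  · rintro w hw k
    have h1 := part1 w hw k
    have h2 : (0:ℝ) ≤ (ε / nu) ^ 2 * ‖U (T (x k)) - x k‖ ^ 2 := by positivity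
    nlinarith [norm_nonneg (x (k + 1) - w), norm_nonneg (x k - w)]
  · obtain ⟨w, hw⟩ := hfix
    set a : ℕ → ℝ := fun k => ‖x k - w‖ ^ 2 with ha
    have hmono : ∀ k, a (k + 1) ≤ a k := by
      intro k
      have h1 := part1 w hw k
      have h2 : (0:ℝ) ≤ (ε / nu) ^ 2 * ‖U (T (x k)) - x k‖ ^ 2 := by positivity
      simp only [ha]; linarith
    have hbdd : BddBelow (Set.range a) := by
      refine ⟨0, ?_⟩
      rintro y ⟨k, rfl⟩
      positivity
    have hL : Tendsto a atTop (nhds (⨅ k, a k)) :=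
      tendsto_atTop_ciInf (antitone_nat_of_succ_le hmono) hbdd
    have hL' : Tendsto (fun k => a (k + 1)) atTop (nhds (⨅ k, a k)) :=
      hL.comp (tendsto_add_atTop_nat 1)
    have hdiff : Tendsto (fun k => a k - a (k + 1)) atTop (nhds 0) := by
      have := hL.sub hL'
      simpa using this
    have hsq : Tendsto (fun k => (ε / nu) ^ 2 * ‖U (T (x k)) - x k‖ ^ 2) atTop (nhds 0) := by
      refine tendsto_of_tendsto_of_tendsto_of_le_of_le tendsto_const_nhds hdiff ?_ ?_
      · intro k; positivity
      · intro k; exact part1 w hw k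
    have hco : (0:ℝ) < (ε / nu) ^ 2 := by positivity
    have hsq2 : Tendsto (fun k => ‖U (T (x k)) - x k‖ ^ 2) atTop (nhds 0) := by
      have := hsq.const_mul ((ε / nu) ^ 2)⁻¹
      simp only [← mul_assoc, inv_mul_cancel₀ hco.ne', one_mul, mul_zero] at this
      exact this
    have := hsq2.sqrt
    simpa [Real.sqrt_sq (norm_nonneg _)] using this
end

section
/- Let (x^k) ⊆ H be Fejér monotone with respect to a nonempty set C ⊆ H, and suppose x^k converges strongly to a point x* ∈ C. Then ‖x^k − x*‖ ≤ 2 d(x^k, C) for all k. -/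
open Filter

theorem stmt_13 {H : Type*} [NormedAddCommGroup H] [InnerProductSpace ℝ H]
    (C : Set H) (hC : C.Nonempty) (x : ℕ → H)
    (hfejer : ∀ z ∈ C, ∀ k, ‖x (k + 1) - z‖ ≤ ‖x k - z‖)
    (xstar : H) (hxstar : xstar ∈ C)
    (hconv : Tendsto x atTop (nhds xstar)) :
    ∀ k, ‖x k - xstar‖ ≤ 2 * Metric.infDist (x k) C := by
  intro k
  have h2 : ‖x k - xstar‖ / 2 ≤ Metric.infDist (x k) C := by
    by_contra hcon
    push_neg at hcon
    obtain ⟨z, hz, hdz⟩ := (Metric.infDist_lt_iff hC).mp hcon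
    suffices h : ‖x k - xstar‖ / 2 ≤ dist (x k) z by linarith
    -- monotone: ∀ n ≥ k, ‖x n - z‖ ≤ ‖x k - z‖
    have hmono : ∀ n, k ≤ n → ‖x n - z‖ ≤ ‖x k - z‖ := by
      intro n hn
      induction n with
      | zero => simp_all
      | succ m ih =>
        rcases Nat.lt_or_ge k (m + 1) with h | h
        · exact le_trans (hfejer z hz m) (ih (Nat.lt_succ_iff.mp h))
        · have : k = m + 1 := le_antisymm hn h
          simp [this]
    -- limit: ‖xstar - z‖ ≤ ‖x k - z‖
    have hlim : Tendsto (fun n => ‖x n - z‖) atTop (nhds ‖xstar - z‖) :=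
      ((hconv.sub tendsto_const_nhds).norm)
    have hle : ‖xstar - z‖ ≤ ‖x k - z‖ :=
      le_of_tendsto hlim (Filter.eventually_atTop.mpr ⟨k, hmono⟩)
    have htri : ‖x k - xstar‖ ≤ ‖x k - z‖ + ‖xstar - z‖ := by
      have := norm_sub_le_norm_sub_add_norm_sub (x k) z xstar
      calc ‖x k - xstar‖ ≤ ‖x k - z‖ + ‖z - xstar‖ := this
        _ = ‖x k - z‖ + ‖xstar - z‖ := by rw [norm_sub_rev z xstar]
    rw [dist_eq_norm]
    linarith
  linarith
end

section
/- Let T, U : H → H be λ- and μ-relaxed cutters with λ, μ > 0, λμ < 4, Fix T ∩ Fix U ≠ ∅, and ν := 4(λ + μ − λμ)/(4 − λμ). Let z ∈ Fix T ∩ Fix U, x^0 ∈ H, r := ‖x^0 − z‖ > 0, R := max{r, (λ−1)r}. Define x^{k+1} := x^k + (α_k/ν)(UT(x^k) − x^k) with α_k ∈ [ε, 2−ε], ε > 0. If T is δ₁-linearly regular over B(z, r), U is δ₂-linearly regular over B(z, R), and {Fix T, Fix U} is κ-linearly regular over B(z, r) (δ₁, δ₂ ∈ (0,1], κ > 0),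 then (x^k) converges strongly to some x* ∈ Fix T ∩ Fix U and ‖x^{k+1} − x*‖ ≤ √(1 − (εδ/(2ν))²)·‖x^k − x*‖ for all k, where δ := (|α| min{δ₁, δ₂}/(2κ(1 + β√ν)))² with α := √(1/λ − 1/ν) − √(1/μ − 1/ν) and β := max{√(1/λ − 1/ν), √(1/μ − 1/ν)}. -/
open RealInnerProductSpace Filter

/-- lower bound for `infDist`. -/
lemma my_le_infDist {α : Type*} [PseudoMetricSpace α] {s : Set α} (hs : s.Nonempty) {x : α}
    {b : ℝ} (H : ∀ y ∈ s, b ≤ dist x y) : b ≤ Metric.infDist x s := by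
  by_contra h
  push_neg at h
  obtain ⟨y, hy, hlt⟩ := (Metric.infDist_lt_iff hs).1 h
  exact absurd (H y hy) (not_le.2 hlt)

/-- From `A² ≤ τ B²` with `A, B ≥ 0` conclude `A ≤ √τ · B`. -/
lemma my_sq_le {A B τ : ℝ} (hA : 0 ≤ A) (hB : 0 ≤ B) (h : A ^ 2 ≤ τ * B ^ 2) :
    A ≤ Real.sqrt τ * B := by
  rcases le_or_gt 0 τ with hτ | hτ
  · have h1 : A ≤ Real.sqrt (τ * B ^ 2) := by
      rw [← Real.sqrt_sq hA]
      exact Real.sqrt_le_sqrt h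
    rwa [Real.sqrt_mul hτ, Real.sqrt_sq hB] at h1
  · have hA0 : A = 0 := by nlinarith [sq_nonneg B]
    have hτ0 : Real.sqrt τ = 0 := Real.sqrt_eq_zero_of_nonpos hτ.le
    rw [hA0, hτ0, zero_mul]

/-- `A ≤ B` from `A² ≤ B²` for nonnegative reals. -/
lemma my_le_of_sq_le_sq {A B : ℝ} (hA : 0 ≤ A) (hB : 0 ≤ B) (h : A ^ 2 ≤ B ^ 2) : A ≤ B := by
  nlinarith

/-- A point approximable by fixed points of a relaxed cutter is a fixed point. -/
lemma my_fix_of_approx {H : Type*} [NormedAddCommGroup H] [InnerProductSpace ℝ H]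
    {T : H → H} {lam : ℝ} (hlam : 0 < lam)
    (hT : ∀ x z, T z = z → lam * ⟪z - x, T x - x⟫ ≥ ‖T x - x‖ ^ 2)
    {y : H} (hy : ∀ η : ℝ, 0 < η → ∃ w, T w = w ∧ ‖w - y‖ < η) : T y = y := by
  have key : ∀ η : ℝ, 0 < η → ‖T y - y‖ ^ 2 ≤ lam * η * ‖T y - y‖ := by
    intro η hη
    obtain ⟨w, hw, hwy⟩ := hy η hη
    have h1 := hT y w hw
    have h2 : ⟪w - y, T y - y⟫ ≤ ‖w - y‖ * ‖T y - y‖ := real_inner_le_norm _ _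
    have h3 : ‖w - y‖ * ‖T y - y‖ ≤ η * ‖T y - y‖ :=
      mul_le_mul_of_nonneg_right hwy.le (norm_nonneg _)
    nlinarith [norm_nonneg (T y - y)]
  by_contra hne
  have he : 0 < ‖T y - y‖ := by
    rw [norm_pos_iff, sub_ne_zero]
    exact fun h => hne (by rw [← sub_eq_zero]; rw [sub_eq_zero]; exact h)
  have hη : (0 : ℝ) < ‖T y - y‖ / (2 * lam) := by positivity
  have := key _ hη
  have : ‖T y - y‖ ^ 2 ≤ ‖T y - y‖ ^ 2 / 2 := by
    calc ‖T y - y‖ ^ 2 ≤ lam * (‖T y - y‖ / (2 * lam)) * ‖T y - y‖ := this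
      _ = ‖T y - y‖ ^ 2 / 2 := by field_simp
  nlinarith

set_option maxHeartbeats 1000000 in
theorem stmt_16 {H : Type*} [NormedAddCommGroup H] [InnerProductSpace ℝ H]
    [CompleteSpace H]
    (T U : H → H) (lam mu : ℝ) (hlam : 0 < lam) (hmu : 0 < mu)
    (hT : IsRelaxedCutter T lam) (hU : IsRelaxedCutter U mu)
    (h4 : lam * mu < 4) (z : H) (hzT : T z = z) (hzU : U z = z)
    (nu : ℝ) (hnu : nu = 4 * (lam + mu - lam * mu) / (4 - lam * mu))
    (ε : ℝ) (hε : 0 < ε) (α : ℕ → ℝ) (hα : ∀ k, α k ∈ Set.Icc ε (2 - ε))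
    (x : ℕ → H)
    (hrec : ∀ k, x (k + 1) = x k + (α k / nu) • (U (T (x k)) - x k))
    (r R : ℝ) (hr : r = ‖x 0 - z‖) (hrpos : 0 < r) (hR : R = max r ((lam - 1) * r))
    (δ₁ δ₂ κ : ℝ) (hδ₁ : δ₁ ∈ Set.Ioc (0 : ℝ) 1) (hδ₂ : δ₂ ∈ Set.Ioc (0 : ℝ) 1)
    (hκ : 0 < κ)
    (hTreg : LinearlyRegularOver T δ₁ (Metric.closedBall z r))
    (hUreg : LinearlyRegularOver U δ₂ (Metric.closedBall z R))
    (hpair : PairLinearlyRegularOver {y | T y = y} {y | U y = y} κ (Metric.closedBall z r))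
    (alpha beta δ : ℝ)
    (halpha : alpha = Real.sqrt (1 / lam - 1 / nu) - Real.sqrt (1 / mu - 1 / nu))
    (hbeta : beta = max (Real.sqrt (1 / lam - 1 / nu)) (Real.sqrt (1 / mu - 1 / nu)))
    (hδ : δ = (|alpha| * min δ₁ δ₂ / (2 * κ * (1 + beta * Real.sqrt nu))) ^ 2) :
    ∃ xstar, T xstar = xstar ∧ U xstar = xstar ∧
      Tendsto x atTop (nhds xstar) ∧
      ∀ k, ‖x (k + 1) - xstar‖ ≤
        Real.sqrt (1 - (ε * δ / (2 * nu)) ^ 2) * ‖x k - xstar‖ := by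
  -- basic positivity facts
  have hε1 : ε ≤ 1 := by have h0 := hα 0; have := h0.1.trans h0.2; linarith
  have hs : 0 < 4 - lam * mu := by linarith
  have hsum : 0 < lam + mu - lam * mu := by
    nlinarith only [sq_nonneg (lam - mu), mul_pos hlam hmu, h4, hlam, hmu]
  have hν : 0 < nu := by rw [hnu]; positivity
  have hν0 : nu ≠ 0 := ne_of_gt hν
  set P : ℝ := 1 / lam - 1 / nu with hP
  set Q : ℝ := 1 / mu - 1 / nu with hQ
  have hlamnu : lam ≤ nu := by
    rw [hnu, le_div_iff₀ hs]
    nlinarith only [mul_nonneg hmu.le (sq_nonneg (2 - lam))]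
  have hmunu : mu ≤ nu := by
    rw [hnu, le_div_iff₀ hs]
    nlinarith only [mul_nonneg hlam.le (sq_nonneg (2 - mu))]
  have hPnn : 0 ≤ P := by
    rw [hP, sub_nonneg]
    exact one_div_le_one_div_of_le hlam hlamnu
  have hQnn : 0 ≤ Q := by
    rw [hQ, sub_nonneg]
    exact one_div_le_one_div_of_le hmu hmunu
  have hid : (1 - 2 / nu) ^ 2 = 4 * P * Q := by
    rw [hP, hQ, hnu]
    have h1 : lam ≠ 0 := ne_of_gt hlam
    have h2 : mu ≠ 0 := ne_of_gt hmu
    have h3 : (4 : ℝ) - lam * mu ≠ 0 := ne_of_gt hs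
    have h4' : lam + mu - lam * mu ≠ 0 := ne_of_gt hsum
    field_simp
    ring
  set sp : ℝ := Real.sqrt P with hsp
  set sq' : ℝ := Real.sqrt Q with hsq'
  have hsp2 : sp ^ 2 = P := Real.sq_sqrt hPnn
  have hsq2 : sq' ^ 2 = Q := Real.sq_sqrt hQnn
  have hspnn : 0 ≤ sp := Real.sqrt_nonneg _
  have hsqnn : 0 ≤ sq' := Real.sqrt_nonneg _
  have habsid : |1 - 2 / nu| = 2 * (sp * sq') := by
    have h1 : |1 - 2 / nu| = Real.sqrt ((1 - 2 / nu) ^ 2) := (Real.sqrt_sq_eq_abs _).symm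
    rw [h1, hid]
    rw [show (4 : ℝ) * P * Q = (2 * (sp * sq')) ^ 2 by
      rw [mul_pow, mul_pow, hsp2, hsq2]; ring]
    exact Real.sqrt_sq (by positivity)
  -- the common fixed point set
  set F : Set H := {y | T y = y} ∩ {y | U y = y} with hF
  have hzF : z ∈ F := ⟨hzT, hzU⟩
  have hFne : F.Nonempty := ⟨z, hzF⟩
  have hTc := hT.2
  have hUc := hU.2
  -- fundamental inner product inequality for the composition
  have keyA0 : ∀ w ∈ F, ∀ y : H,
      ‖T y - y‖ ^ 2 / lam + ‖U (T y) - T y‖ ^ 2 / mu + ⟪T y - y, U (T y) - T y⟫ ≤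
        ⟪w - y, U (T y) - y⟫ := by
    intro w hw y
    have h1 : ‖T y - y‖ ^ 2 ≤ lam * ⟪w - y, T y - y⟫ := hTc y w hw.1
    have h2 : ‖U (T y) - T y‖ ^ 2 ≤ mu * ⟪w - T y, U (T y) - T y⟫ := hUc (T y) w hw.2
    have hsplit : ⟪w - y, U (T y) - y⟫ =
        ⟪w - y, T y - y⟫ + ⟪w - T y, U (T y) - T y⟫ + ⟪T y - y, U (T y) - T y⟫ := by
      rw [show U (T y) - y = (U (T y) - T y) + (T y - y) by abel, inner_add_right,
        show w - y = (w - T y) + (T y - y) by abel, inner_add_left]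
      ring
    have e1 : ‖T y - y‖ ^ 2 / lam ≤ ⟪w - y, T y - y⟫ := by
      rw [div_le_iff₀ hlam]; linarith [h1]
    have e2 : ‖U (T y) - T y‖ ^ 2 / mu ≤ ⟪w - T y, U (T y) - T y⟫ := by
      rw [div_le_iff₀ hmu]; linarith [h2]
    rw [hsplit]
    linarith
  have keyA : ∀ w ∈ F, ∀ y : H,
      (1 / nu) * ‖U (T y) - y‖ ^ 2 + (sp * ‖T y - y‖ - sq' * ‖U (T y) - T y‖) ^ 2 ≤
        ⟪w - y, U (T y) - y⟫ := by
    intro w hw y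
    have h0 := keyA0 w hw y
    set a : ℝ := ‖T y - y‖ with ha
    set b : ℝ := ‖U (T y) - T y‖ with hb
    set t : ℝ := ⟪T y - y, U (T y) - T y⟫ with ht
    have hc2 : ‖U (T y) - y‖ ^ 2 = a ^ 2 + b ^ 2 + 2 * t := by
      rw [show U (T y) - y = (U (T y) - T y) + (T y - y) by abel, norm_add_sq_real, ht,
        real_inner_comm]
      ring
    have hcs : |t| ≤ a * b := by
      rw [ht, ha, hb]
      calc |⟪T y - y, U (T y) - T y⟫| ≤ ‖T y - y‖ * ‖U (T y) - T y‖ :=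
            abs_real_inner_le_norm _ _
        _ = ‖T y - y‖ * ‖U (T y) - T y‖ := rfl
    -- key sign estimate
    have hkey : 0 ≤ (1 - 2 / nu) * t + 2 * (sp * sq') * (a * b) := by
      have h1 : -((1 - 2 / nu) * t) ≤ |(1 - 2 / nu) * t| := neg_le_abs _
      have h2 : |(1 - 2 / nu) * t| = 2 * (sp * sq') * |t| := by
        rw [abs_mul, habsid]
      have h3 : 2 * (sp * sq') * |t| ≤ 2 * (sp * sq') * (a * b) := by
        apply mul_le_mul_of_nonneg_left hcs (by positivity)
      linarith
    have hexp : (sp * a - sq' * b) ^ 2 = P * a ^ 2 + Q * b ^ 2 - 2 * (sp * sq') * (a * b) := by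
      have : (sp * a - sq' * b) ^ 2 = sp ^ 2 * a ^ 2 + sq' ^ 2 * b ^ 2
          - 2 * (sp * sq') * (a * b) := by ring
      rw [this, hsp2, hsq2]
    have halg : (1 / nu) * (a ^ 2 + b ^ 2 + 2 * t) + (P * a ^ 2 + Q * b ^ 2
        - 2 * (sp * sq') * (a * b)) ≤ a ^ 2 / lam + b ^ 2 / mu + t := by
      have hPdef : P = 1 / lam - 1 / nu := hP
      have hQdef : Q = 1 / mu - 1 / nu := hQ
      have hdiff : a ^ 2 / lam + b ^ 2 / mu + t
          - ((1 / nu) * (a ^ 2 + b ^ 2 + 2 * t) + (P * a ^ 2 + Q * b ^ 2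
            - 2 * (sp * sq') * (a * b)))
          = (1 - 2 / nu) * t + 2 * (sp * sq') * (a * b) := by
        rw [hPdef, hQdef]
        field_simp
        ring
      linarith [hkey, hdiff]
    calc (1 / nu) * ‖U (T y) - y‖ ^ 2 + (sp * a - sq' * b) ^ 2
        = (1 / nu) * (a ^ 2 + b ^ 2 + 2 * t) + (P * a ^ 2 + Q * b ^ 2
            - 2 * (sp * sq') * (a * b)) := by rw [hc2, hexp]
      _ ≤ a ^ 2 / lam + b ^ 2 / mu + t := halg
      _ ≤ ⟪w - y, U (T y) - y⟫ := h0
  -- Fejér type step estimate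
  have stepB : ∀ w ∈ F, ∀ k,
      ‖x (k + 1) - w‖ ^ 2 ≤ ‖x k - w‖ ^ 2 - (ε / nu) ^ 2 * ‖U (T (x k)) - x k‖ ^ 2 := by
    intro w hw k
    set y := x k with hy
    set d : H := U (T y) - y with hd
    set ak := α k with hak
    have hak1 : ε ≤ ak := (hα k).1
    have hak2 : ak ≤ 2 - ε := (hα k).2
    have hakpos : 0 < ak := lt_of_lt_of_le hε hak1
    have hin : ⟪w - y, d⟫ ≥ (1 / nu) * ‖d‖ ^ 2 := by
      have := keyA w hw y
      have h2 : (0:ℝ) ≤ (sp * ‖T y - y‖ - sq' * ‖U (T y) - T y‖) ^ 2 := sq_nonneg _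
      rw [ge_iff_le]
      linarith
    have hexp : ‖x (k + 1) - w‖ ^ 2 = ‖y - w‖ ^ 2 + 2 * ((ak / nu) * ⟪y - w, d⟫)
        + (ak / nu) ^ 2 * ‖d‖ ^ 2 := by
      rw [hrec k]
      rw [show x k + (α k / nu) • (U (T (x k)) - x k) - w = (y - w) + (ak / nu) • d by
        rw [hd, hy, hak]; abel]
      rw [norm_add_sq_real, real_inner_smul_right, norm_smul]
      rw [Real.norm_eq_abs, mul_pow, sq_abs]
    have hneg : ⟪y - w, d⟫ = -⟪w - y, d⟫ := by
      rw [show y - w = -(w - y) by abel, inner_neg_left]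
    have hD : (0:ℝ) ≤ ‖d‖ ^ 2 := sq_nonneg _
    have hco : ε ^ 2 ≤ ak * (2 - ak) := by nlinarith only [hak1, hak2, hε, hε1]
    rw [hexp, hneg]
    have hstep : 2 * ((ak / nu) * -⟪w - y, d⟫) ≤ 2 * ((ak / nu) * (-(1 / nu) * ‖d‖ ^ 2)) := by
      have := mul_le_mul_of_nonneg_left (neg_le_neg hin) (le_of_lt (by positivity : (0:ℝ) < ak / nu))
      have h2 : (ak / nu) * -⟪w - y, d⟫ ≤ (ak / nu) * -((1 / nu) * ‖d‖ ^ 2) := this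
      linarith
    have hfin : ‖y - w‖ ^ 2 + 2 * ((ak / nu) * (-(1 / nu) * ‖d‖ ^ 2)) + (ak / nu) ^ 2 * ‖d‖ ^ 2
        ≤ ‖y - w‖ ^ 2 - (ε / nu) ^ 2 * ‖d‖ ^ 2 := by
      have hν2 : (0:ℝ) < nu ^ 2 := by positivity
      rw [div_pow, div_pow]
      have : 2 * ((ak / nu) * (-(1 / nu) * ‖d‖ ^ 2)) = -(2 * ak) / nu ^ 2 * ‖d‖ ^ 2 := by
        field_simp
      rw [this]
      have hmain : (-(2 * ak) / nu ^ 2 + ak ^ 2 / nu ^ 2 + ε ^ 2 / nu ^ 2) * ‖d‖ ^ 2 ≤ 0 := by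
        apply mul_nonpos_of_nonpos_of_nonneg _ hD
        rw [← add_div, ← add_div, div_nonpos_iff]
        right
        exact ⟨by nlinarith only [hco], le_of_lt hν2⟩
      nlinarith only [hmain]
    linarith
  -- iterates remain in the ball
  have hball : ∀ k, ‖x k - z‖ ≤ r := by
    intro k
    induction k with
    | zero => rw [hr]
    | succ n ih =>
      have h1 := stepB z hzF n
      have h2 : ‖x (n + 1) - z‖ ^ 2 ≤ ‖x n - z‖ ^ 2 := by
        have h0 : (0:ℝ) ≤ (ε / nu) ^ 2 * ‖U (T (x n)) - x n‖ ^ 2 := by positivity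
        linarith [h1]
      have h3 : ‖x (n + 1) - z‖ ^ 2 ≤ r ^ 2 := by
        nlinarith only [h2, ih, norm_nonneg (x n - z)]
      exact my_le_of_sq_le_sq (norm_nonneg _) hrpos.le h3
  -- T maps the ball into the bigger ball
  have hTball : ∀ y : H, ‖y - z‖ ≤ r → ‖T y - z‖ ≤ R := by
    intro y hyr
    set a : ℝ := ‖T y - y‖ with ha
    have h1 : a ^ 2 ≤ lam * ⟪z - y, T y - y⟫ := hTc y z hzT
    have hexp : ‖T y - z‖ ^ 2 = a ^ 2 - 2 * ⟪z - y, T y - y⟫ + ‖y - z‖ ^ 2 := by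
      rw [show T y - z = (T y - y) + (y - z) by abel, norm_add_sq_real, ha]
      rw [show ⟪T y - y, y - z⟫ = -⟪z - y, T y - y⟫ by
        rw [real_inner_comm, show y - z = -(z - y) by abel, inner_neg_left]]
      ring
    have hanonneg : (0:ℝ) ≤ a := norm_nonneg _
    rcases le_or_gt lam 2 with hl2 | hl2
    · -- ‖T y - z‖ ≤ ‖y - z‖ ≤ r ≤ R
      have h2 : ‖T y - z‖ ^ 2 ≤ ‖y - z‖ ^ 2 := by
        have h3 : a ^ 2 / lam ≤ ⟪z - y, T y - y⟫ := by
          rw [div_le_iff₀ hlam]; linarith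
        have h4 : a ^ 2 - 2 * ⟪z - y, T y - y⟫ ≤ a ^ 2 - 2 * (a ^ 2 / lam) := by linarith
        have h5 : a ^ 2 - 2 * (a ^ 2 / lam) ≤ 0 := by
          rw [sub_nonpos, show 2 * (a ^ 2 / lam) = 2 * a ^ 2 / lam by ring,
            le_div_iff₀ hlam]
          nlinarith only [mul_nonneg (sub_nonneg.2 hl2) (sq_nonneg a)]
        linarith [hexp, h4, h5]
      have h6 : ‖T y - z‖ ≤ r := by
        have h7 : ‖T y - z‖ ^ 2 ≤ r ^ 2 := by
          nlinarith only [h2, hyr, norm_nonneg (y - z)]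
        exact my_le_of_sq_le_sq (norm_nonneg _) hrpos.le h7
      rw [hR]; exact le_trans h6 (le_max_left _ _)
    · -- ‖T y - z‖ ≤ (lam - 1) ‖y - z‖
      have hW : (0:ℝ) ≤ ‖y - z‖ := norm_nonneg _
      have hcs2 : ⟪z - y, T y - y⟫ ≤ ‖y - z‖ * a := by
        calc ⟪z - y, T y - y⟫ ≤ ‖z - y‖ * ‖T y - y‖ := real_inner_le_norm _ _
          _ = ‖y - z‖ * a := by rw [norm_sub_rev, ha]
      have haW : a ≤ lam * ‖y - z‖ := by
        rcases eq_or_lt_of_le hanonneg with h0 | h0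
        · rw [← h0]; positivity
        · nlinarith only [h1, hcs2, h0, hlam]
      have h3 : a ^ 2 / lam ≤ ⟪z - y, T y - y⟫ := by
        rw [div_le_iff₀ hlam]; linarith
      have h2 : ‖T y - z‖ ^ 2 ≤ ((lam - 1) * ‖y - z‖) ^ 2 := by
        have h4 : ‖T y - z‖ ^ 2 ≤ (1 - 2 / lam) * a ^ 2 + ‖y - z‖ ^ 2 := by
          have hstep : a ^ 2 - 2 * ⟪z - y, T y - y⟫ ≤ (1 - 2 / lam) * a ^ 2 := by
            have hq : (1 - 2 / lam) * a ^ 2 = a ^ 2 - 2 * (a ^ 2 / lam) := by ring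
            rw [hq]
            linarith [h3]
          linarith [hexp, hstep]
        have h5 : (1 - 2 / lam) * a ^ 2 ≤ (1 - 2 / lam) * (lam * ‖y - z‖) ^ 2 := by
          apply mul_le_mul_of_nonneg_left _ (by
            rw [sub_nonneg, div_le_one hlam]; linarith)
          nlinarith only [haW, hanonneg, hW, hlam]
        have h6 : (1 - 2 / lam) * (lam * ‖y - z‖) ^ 2 + ‖y - z‖ ^ 2
            = ((lam - 1) * ‖y - z‖) ^ 2 := by
          field_simp
          ring
        linarith [h4, h5, h6]
      have h7 : ‖T y - z‖ ≤ (lam - 1) * ‖y - z‖ := by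
        exact my_le_of_sq_le_sq (norm_nonneg _)
          (mul_nonneg (by linarith : (0:ℝ) ≤ lam - 1) hW) h2
      have h8 : (lam - 1) * ‖y - z‖ ≤ (lam - 1) * r := by
        apply mul_le_mul_of_nonneg_left hyr (by linarith)
      rw [hR]
      exact le_trans (le_trans h7 h8) (le_max_right _ _)
  -- regularity constants
  set δm : ℝ := min δ₁ δ₂ with hδm
  have hδm0 : 0 < δm := lt_min hδ₁.1 hδ₂.1
  have hδm1 : δm ≤ 1 := le_trans (min_le_left _ _) hδ₁.2
  have hbeta0 : 0 ≤ beta := by rw [hbeta]; exact le_trans hspnn (le_max_left _ _)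
  have hδ0 : 0 ≤ δ := by rw [hδ]; positivity
  have hden : 0 < 2 * κ * (1 + beta * Real.sqrt nu) := by positivity
  -- distance bound via the individual regularities
  have habd : ∀ y : H, ‖y - z‖ ≤ r →
      δm * Metric.infDist y F / κ ≤ ‖T y - y‖ + ‖U (T y) - T y‖ := by
    intro y hyr
    have hmem : y ∈ Metric.closedBall z r := by
      rw [Metric.mem_closedBall, dist_eq_norm]; exact hyr
    have h1 := hpair y hmem
    have h2 := hTreg y hmem
    have hmem2 : T y ∈ Metric.closedBall z R := by
      rw [Metric.mem_closedBall, dist_eq_norm]; exact hTball y hyr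
    have h3 := hUreg (T y) hmem2
    have h4 : Metric.infDist y {y | T y = y} ≤ ‖T y - y‖ / δ₁ := by
      rw [le_div_iff₀ hδ₁.1]; linarith [h2]
    have h5 : Metric.infDist (T y) {y | U y = y} ≤ ‖U (T y) - T y‖ / δ₂ := by
      rw [le_div_iff₀ hδ₂.1]; linarith [h3]
    have h6 : Metric.infDist y {y | U y = y} ≤
        Metric.infDist (T y) {y | U y = y} + dist y (T y) :=
      Metric.infDist_le_infDist_add_dist
    have h7 : dist y (T y) = ‖T y - y‖ := by rw [dist_eq_norm, norm_sub_rev]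
    set a : ℝ := ‖T y - y‖ with ha
    set b : ℝ := ‖U (T y) - T y‖ with hb
    have hann : 0 ≤ a := norm_nonneg _
    have hbnn : 0 ≤ b := norm_nonneg _
    have hm1 : δm ≤ δ₁ := by rw [hδm]; exact min_le_left _ _
    have hm2 : δm ≤ δ₂ := by rw [hδm]; exact min_le_right _ _
    have hadm : a ≤ a / δm := by
      rw [le_div_iff₀ hδm0]
      nlinarith only [mul_le_mul_of_nonneg_left hδm1 hann]
    have hbdm : b / δ₂ ≤ b / δm := div_le_div_of_nonneg_left hbnn hδm0 hm2
    have hsum' : b / δm + a / δm = (a + b) / δm := by ring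
    have hmax : max (Metric.infDist y {y | T y = y}) (Metric.infDist y {y | U y = y})
        ≤ (a + b) / δm := by
      apply max_le
      · have p1 : a / δ₁ ≤ a / δm := div_le_div_of_nonneg_left hann hδm0 hm1
        have p2 : (0:ℝ) ≤ b / δm := by positivity
        linarith [h4, p1, hsum']
      · have p1 : Metric.infDist y {y | U y = y} ≤ b / δ₂ + a := by
          rw [h7] at h6; linarith [h5, h6]
        linarith [p1, hbdm, hadm, hsum']
    have h8 : Metric.infDist y F ≤ κ * ((a + b) / δm) := by
      refine le_trans h1 (mul_le_mul_of_nonneg_left hmax hκ.le)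
    rw [div_le_iff₀ hκ]
    have h9 : δm * Metric.infDist y F ≤ δm * (κ * ((a + b) / δm)) :=
      mul_le_mul_of_nonneg_left h8 hδm0.le
    have h10 : δm * (κ * ((a + b) / δm)) = (a + b) * κ := by
      field_simp
    linarith [h9, h10]
  -- generic conclusion step from the quadratic bound
  have hconc : ∀ (g : ℝ) (y : H), 0 ≤ g →
      (∀ w ∈ F, g * (Metric.infDist y F) ^ 2 ≤ ‖w - y‖ * ‖U (T y) - y‖) →
      g * Metric.infDist y F ≤ ‖U (T y) - y‖ := by
    intro g y hg hq
    set c : ℝ := ‖U (T y) - y‖ with hc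
    have hcnn : 0 ≤ c := norm_nonneg _
    set dF : ℝ := Metric.infDist y F with hdF
    have hdnn : 0 ≤ dF := Metric.infDist_nonneg
    rcases eq_or_lt_of_le hdnn with hd0 | hd0
    · rw [← hd0, mul_zero]; exact hcnn
    rcases eq_or_lt_of_le hcnn with hc0 | hc0
    · have h0 := hq z hzF
      rw [← hc0, mul_zero] at h0
      rw [← hc0]
      nlinarith only [h0, hd0]
    have h1 : ∀ w ∈ F, g * dF ^ 2 / c ≤ dist y w := by
      intro w hw
      rw [div_le_iff₀ hc0, dist_eq_norm, ← norm_sub_rev]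
      exact hq w hw
    have h2 : g * dF ^ 2 / c ≤ dF := my_le_infDist hFne h1
    have h3 : g * dF ^ 2 ≤ dF * c := by
      rw [div_le_iff₀ hc0] at h2; linarith
    nlinarith only [h3, hd0]
  -- δ-linear regularity of the composition over the ball
  have hregδ : ∀ y : H, ‖y - z‖ ≤ r → δ * Metric.infDist y F ≤ ‖U (T y) - y‖ := by
    intro y hyr
    apply hconc δ y hδ0
    intro w hw
    set a : ℝ := ‖T y - y‖ with ha
    set b : ℝ := ‖U (T y) - T y‖ with hb
    set c : ℝ := ‖U (T y) - y‖ with hc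
    set W : ℝ := ‖w - y‖ with hW
    have hann : 0 ≤ a := norm_nonneg _
    have hbnn : 0 ≤ b := norm_nonneg _
    have hcnn : 0 ≤ c := norm_nonneg _
    have hWnn : 0 ≤ W := norm_nonneg _
    have hWcnn : 0 ≤ W * c := mul_nonneg hWnn hcnn
    have hA := keyA w hw y
    have hWc : (1 / nu) * c ^ 2 + (sp * a - sq' * b) ^ 2 ≤ W * c := by
      refine le_trans hA ?_
      exact real_inner_le_norm _ _
    have h1 : (sp * a - sq' * b) ^ 2 ≤ W * c := by
      have : (0:ℝ) ≤ (1 / nu) * c ^ 2 := by positivity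
      linarith
    have h2 : c ^ 2 ≤ nu * (W * c) := by
      have h2a := mul_le_mul_of_nonneg_left hWc hν.le
      have h2b : nu * ((1 / nu) * c ^ 2 + (sp * a - sq' * b) ^ 2)
          = c ^ 2 + nu * (sp * a - sq' * b) ^ 2 := by
        field_simp
      have h2c : (0:ℝ) ≤ nu * (sp * a - sq' * b) ^ 2 := by positivity
      linarith
    have h3 : |sp * a - sq' * b| ≤ Real.sqrt (W * c) := Real.abs_le_sqrt h1
    have h4 : c ≤ Real.sqrt nu * Real.sqrt (W * c) := by
      have h4a : Real.sqrt (c ^ 2) ≤ Real.sqrt (nu * (W * c)) := Real.sqrt_le_sqrt h2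
      rw [Real.sqrt_sq hcnn] at h4a
      rw [← Real.sqrt_mul hν.le]
      exact h4a
    have htri : |a - b| ≤ c := by
      have t1 : a ≤ b + c := by
        rw [ha, hb, hc]
        calc ‖T y - y‖ = ‖(T y - U (T y)) + (U (T y) - y)‖ := by rw [show
            (T y - U (T y)) + (U (T y) - y) = T y - y by abel]
          _ ≤ ‖T y - U (T y)‖ + ‖U (T y) - y‖ := norm_add_le _ _
          _ = ‖U (T y) - T y‖ + ‖U (T y) - y‖ := by rw [norm_sub_rev]
      have t2 : b ≤ a + c := by
        rw [ha, hb, hc]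
        calc ‖U (T y) - T y‖ = ‖(U (T y) - y) + (y - T y)‖ := by rw [show
            (U (T y) - y) + (y - T y) = U (T y) - T y by abel]
          _ ≤ ‖U (T y) - y‖ + ‖y - T y‖ := norm_add_le _ _
          _ = ‖T y - y‖ + ‖U (T y) - y‖ := by rw [norm_sub_rev y (T y)]; ring
      rw [abs_sub_le_iff]
      exact ⟨by linarith, by linarith⟩
    have hsqb : sq' ≤ beta := by rw [hbeta]; exact le_max_right _ _
    have hspb : sp ≤ beta := by rw [hbeta]; exact le_max_left _ _
    have h5 : |alpha| * a ≤ Real.sqrt (W * c) + beta * c := by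
      have e : (sp - sq') * a = (sp * a - sq' * b) + sq' * (b - a) := by ring
      have e1 : |alpha| * a = |(sp - sq') * a| := by
        rw [halpha, abs_mul, abs_of_nonneg hann]
      have e2 : |(sp - sq') * a| ≤ |sp * a - sq' * b| + sq' * |b - a| := by
        rw [e]
        refine le_trans (abs_add_le _ _) ?_
        rw [abs_mul, abs_of_nonneg hsqnn]
      have e3 : sq' * |b - a| ≤ beta * c := by
        rw [abs_sub_comm]
        exact mul_le_mul hsqb htri (abs_nonneg _) hbeta0
      linarith [e1.le, e2, e3, h3]
    have h6 : |alpha| * b ≤ Real.sqrt (W * c) + beta * c := by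
      have e : (sp - sq') * b = (sp * a - sq' * b) + sp * (b - a) := by ring
      have e1 : |alpha| * b = |(sp - sq') * b| := by
        rw [halpha, abs_mul, abs_of_nonneg hbnn]
      have e2 : |(sp - sq') * b| ≤ |sp * a - sq' * b| + sp * |b - a| := by
        rw [e]
        refine le_trans (abs_add_le _ _) ?_
        rw [abs_mul, abs_of_nonneg hspnn]
      have e3 : sp * |b - a| ≤ beta * c := by
        rw [abs_sub_comm]
        exact mul_le_mul hspb htri (abs_nonneg _) hbeta0
      linarith [e1.le, e2, e3, h3]
    have h7 : |alpha| * (a + b) ≤ 2 * (1 + beta * Real.sqrt nu) * Real.sqrt (W * c) := by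
      have h8 : beta * c ≤ beta * Real.sqrt nu * Real.sqrt (W * c) := by
        calc beta * c ≤ beta * (Real.sqrt nu * Real.sqrt (W * c)) :=
            mul_le_mul_of_nonneg_left h4 hbeta0
          _ = beta * Real.sqrt nu * Real.sqrt (W * c) := by ring
      have := add_le_add h5 h6
      nlinarith only [this, h8]
    have h9 := habd y hyr
    have h10 : |alpha| * (δm * Metric.infDist y F / κ) ≤
        2 * (1 + beta * Real.sqrt nu) * Real.sqrt (W * c) := by
      refine le_trans (mul_le_mul_of_nonneg_left h9 (abs_nonneg _)) h7
    have hsδ : Real.sqrt δ = |alpha| * δm / (2 * κ * (1 + beta * Real.sqrt nu)) := by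
      rw [hδ, hδm]
      exact Real.sqrt_sq (by positivity)
    have h11 : Real.sqrt δ * Metric.infDist y F ≤ Real.sqrt (W * c) := by
      rw [hsδ, div_mul_eq_mul_div, div_le_iff₀ hden]
      have hdnn : 0 ≤ Metric.infDist y F := Metric.infDist_nonneg
      calc |alpha| * δm * Metric.infDist y F
          = κ * (|alpha| * (δm * Metric.infDist y F / κ)) := by field_simp
        _ ≤ κ * (2 * (1 + beta * Real.sqrt nu) * Real.sqrt (W * c)) :=
            mul_le_mul_of_nonneg_left h10 hκ.le
        _ = Real.sqrt (W * c) * (2 * κ * (1 + beta * Real.sqrt nu)) := by ring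
    have h12 : (Real.sqrt δ * Metric.infDist y F) ^ 2 ≤ Real.sqrt (W * c) ^ 2 := by
      apply pow_le_pow_left₀ (mul_nonneg (Real.sqrt_nonneg _) Metric.infDist_nonneg) h11
    rw [mul_pow, Real.sq_sqrt hδ0, Real.sq_sqrt hWcnn] at h12
    exact h12
  -- a positive regularity constant
  obtain ⟨γ, hγpos, hδγ, hγreg⟩ : ∃ γ : ℝ, 0 < γ ∧ δ ≤ γ ∧
      ∀ y : H, ‖y - z‖ ≤ r → γ * Metric.infDist y F ≤ ‖U (T y) - y‖ := by
    by_cases hlm : lam = mu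
    · -- degenerate case: alpha = 0, use the direct bound
      have hPQ : P = Q := by rw [hP, hQ, hlm]
      have halpha0 : alpha = 0 := by rw [halpha, hsp, hsq', hPQ, sub_self]
      have hδzero : δ = 0 := by rw [hδ, halpha0]; simp
      have hlam2 : lam < 2 := by nlinarith only [h4, hlm, hlam]
      set m : ℝ := 1 / lam - 1 / 2 with hm
      have hmpos : 0 < m := by
        rw [hm, sub_pos, div_lt_div_iff₀ (by norm_num) hlam]
        linarith
      set sm : ℝ := Real.sqrt m with hsm
      have hsmpos : 0 < sm := Real.sqrt_pos.2 hmpos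
      refine ⟨(sm * δm / (2 * κ)) ^ 2, by positivity, by rw [hδzero]; positivity, ?_⟩
      intro y hyr
      apply hconc _ y (by positivity)
      intro w hw
      set a : ℝ := ‖T y - y‖ with ha
      set b : ℝ := ‖U (T y) - T y‖ with hb
      set c : ℝ := ‖U (T y) - y‖ with hc
      set W : ℝ := ‖w - y‖ with hW
      have hann : 0 ≤ a := norm_nonneg _
      have hbnn : 0 ≤ b := norm_nonneg _
      have hcnn : 0 ≤ c := norm_nonneg _
      have hWnn : 0 ≤ W := norm_nonneg _
      have hWcnn : 0 ≤ W * c := mul_nonneg hWnn hcnn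
      clear_value m sm a b c W
      have hA0 := keyA0 w hw y
      have hc2 : c ^ 2 = a ^ 2 + b ^ 2 + 2 * ⟪T y - y, U (T y) - T y⟫ := by
        rw [hc, show U (T y) - y = (U (T y) - T y) + (T y - y) by abel, norm_add_sq_real,
          real_inner_comm]
        rw [ha, hb]; ring
      have hWc : m * a ^ 2 + m * b ^ 2 ≤ W * c := by
        have hin : ⟪w - y, U (T y) - y⟫ ≤ W * c := by
          rw [hW, hc]; exact real_inner_le_norm _ _
        have hmu' : mu = lam := hlm.symm
        have hsplit : a ^ 2 / lam + b ^ 2 / lam + ⟪T y - y, U (T y) - T y⟫ ≤ W * c := by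
          rw [hmu'] at hA0
          rw [ha, hb]
          exact le_trans hA0 hin
        have hm' : m = 1 / lam - 1 / 2 := hm
        have hrw : a ^ 2 / lam = m * a ^ 2 + a ^ 2 / 2 := by rw [hm']; ring
        have hrw2 : b ^ 2 / lam = m * b ^ 2 + b ^ 2 / 2 := by rw [hm']; ring
        have hcsq : (0:ℝ) ≤ c ^ 2 / 2 := by positivity
        have htid : ⟪T y - y, U (T y) - T y⟫ = (c ^ 2 - a ^ 2 - b ^ 2) / 2 := by
          rw [hc2]; ring
        rw [hrw, hrw2, htid] at hsplit
        have hgoal : m * a ^ 2 + m * b ^ 2 + c ^ 2 / 2 ≤ W * c := by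
          linear_combination hsplit
        linarith only [hgoal, hcsq]
      have hma : sm * a ≤ Real.sqrt (W * c) := by
        have : (sm * a) ^ 2 ≤ W * c := by
          rw [mul_pow, hsm, Real.sq_sqrt hmpos.le]
          nlinarith only [hWc, mul_nonneg hmpos.le (sq_nonneg b)]
        have h0 := Real.abs_le_sqrt this
        rwa [abs_of_nonneg (by positivity)] at h0
      have hmb : sm * b ≤ Real.sqrt (W * c) := by
        have : (sm * b) ^ 2 ≤ W * c := by
          rw [mul_pow, hsm, Real.sq_sqrt hmpos.le]
          nlinarith only [hWc, mul_nonneg hmpos.le (sq_nonneg a)]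
        have h0 := Real.abs_le_sqrt this
        rwa [abs_of_nonneg (by positivity)] at h0
      have h9 : δm * Metric.infDist y F / κ ≤ a + b := by
        rw [ha, hb]; exact habd y hyr
      have h10 : sm * (δm * Metric.infDist y F / κ) ≤ 2 * Real.sqrt (W * c) := by
        have := mul_le_mul_of_nonneg_left h9 hsmpos.le
        nlinarith only [this, hma, hmb]
      have h11 : sm * δm / (2 * κ) * Metric.infDist y F ≤ Real.sqrt (W * c) := by
        rw [div_mul_eq_mul_div, div_le_iff₀ (by positivity : (0:ℝ) < 2 * κ)]
        have hdnn : 0 ≤ Metric.infDist y F := Metric.infDist_nonneg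
        have hid2 : sm * δm * Metric.infDist y F
            = κ * (sm * (δm * Metric.infDist y F / κ)) := by field_simp
        rw [hid2]
        calc κ * (sm * (δm * Metric.infDist y F / κ))
            ≤ κ * (2 * Real.sqrt (W * c)) := mul_le_mul_of_nonneg_left h10 hκ.le
          _ = Real.sqrt (W * c) * (2 * κ) := by ring
      have h12 : (sm * δm / (2 * κ) * Metric.infDist y F) ^ 2 ≤ Real.sqrt (W * c) ^ 2 := by
        apply pow_le_pow_left₀ (mul_nonneg (by positivity) Metric.infDist_nonneg) h11
      rw [mul_pow, Real.sq_sqrt hWcnn] at h12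
      exact h12
    · -- nondegenerate case: δ itself works
      have hPQ : P ≠ Q := by
        rw [hP, hQ]
        intro h
        apply hlm
        have : 1 / lam = 1 / mu := by linarith
        field_simp at this
        linarith [this]
      have hαne : alpha ≠ 0 := by
        rw [halpha, hsp, hsq']
        intro h
        apply hPQ
        have h1 : Real.sqrt P = Real.sqrt Q := by linarith [sub_eq_zero.1 h]
        calc P = Real.sqrt P ^ 2 := (Real.sq_sqrt hPnn).symm
          _ = Real.sqrt Q ^ 2 := by rw [h1]
          _ = Q := Real.sq_sqrt hQnn
      have hδpos : 0 < δ := by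
        rw [hδ]
        have h1 : 0 < |alpha| := abs_pos.2 hαne
        positivity
      exact ⟨δ, hδpos, le_refl _, hregδ⟩
  -- Fejér step with regularity
  have stepC : ∀ g : ℝ, 0 ≤ g →
      (∀ y : H, ‖y - z‖ ≤ r → g * Metric.infDist y F ≤ ‖U (T y) - y‖) →
      ∀ w ∈ F, ∀ k, ‖x (k + 1) - w‖ ^ 2 ≤
        ‖x k - w‖ ^ 2 - (ε * g / nu) ^ 2 * Metric.infDist (x k) F ^ 2 := by
    intro g hg hreg w hw k
    have h1 := stepB w hw k
    have h2 := hreg (x k) (hball k)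
    have hdnn : 0 ≤ Metric.infDist (x k) F := Metric.infDist_nonneg
    have h4 : (g * Metric.infDist (x k) F) ^ 2 ≤ ‖U (T (x k)) - x k‖ ^ 2 :=
      pow_le_pow_left₀ (mul_nonneg hg hdnn) h2 2
    have h5 : (ε * g / nu) ^ 2 * Metric.infDist (x k) F ^ 2
        ≤ (ε / nu) ^ 2 * ‖U (T (x k)) - x k‖ ^ 2 := by
      have h6 : (ε / nu) ^ 2 * (g * Metric.infDist (x k) F) ^ 2 ≤
          (ε / nu) ^ 2 * ‖U (T (x k)) - x k‖ ^ 2 :=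
        mul_le_mul_of_nonneg_left h4 (by positivity)
      calc (ε * g / nu) ^ 2 * Metric.infDist (x k) F ^ 2
          = (ε / nu) ^ 2 * (g * Metric.infDist (x k) F) ^ 2 := by ring
        _ ≤ _ := h6
    linarith
  obtain ⟨ρ, hρ0, hρ1, hρge⟩ : ∃ ρ : ℝ, 0 ≤ ρ ∧ ρ < 1 ∧ 1 - (ε * γ / nu) ^ 2 ≤ ρ := by
    refine ⟨max 0 (1 - (ε * γ / nu) ^ 2), le_max_left _ _, ?_, le_max_right _ _⟩
    have : 0 < (ε * γ / nu) ^ 2 := by positivity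
    exact max_lt one_pos (by linarith)
  have hDrec : ∀ k, Metric.infDist (x (k + 1)) F ^ 2 ≤ ρ * Metric.infDist (x k) F ^ 2 := by
    intro k
    have hkey : Metric.infDist (x (k + 1)) F ^ 2
        + (ε * γ / nu) ^ 2 * Metric.infDist (x k) F ^ 2
        ≤ Metric.infDist (x k) F ^ 2 := by
      have hSnn : (0:ℝ) ≤ Metric.infDist (x (k + 1)) F ^ 2
          + (ε * γ / nu) ^ 2 * Metric.infDist (x k) F ^ 2 := by positivity
      have hb : ∀ w ∈ F, Real.sqrt (Metric.infDist (x (k + 1)) F ^ 2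
          + (ε * γ / nu) ^ 2 * Metric.infDist (x k) F ^ 2) ≤ dist (x k) w := by
        intro w hw
        have h1 := stepC γ hγpos.le hγreg w hw k
        have h2 : Metric.infDist (x (k + 1)) F ^ 2 ≤ ‖x (k + 1) - w‖ ^ 2 := by
          apply pow_le_pow_left₀ Metric.infDist_nonneg
          rw [← dist_eq_norm]
          exact Metric.infDist_le_dist_of_mem hw
        have h3 : Metric.infDist (x (k + 1)) F ^ 2
            + (ε * γ / nu) ^ 2 * Metric.infDist (x k) F ^ 2 ≤ ‖x k - w‖ ^ 2 := by linarith
        have h4 := Real.sqrt_le_sqrt h3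
        rwa [Real.sqrt_sq (norm_nonneg _), ← dist_eq_norm] at h4
      have h5 := my_le_infDist hFne hb
      have h6 := pow_le_pow_left₀ (Real.sqrt_nonneg _) h5 2
      rwa [Real.sq_sqrt hSnn] at h6
    have h7 : (1 - (ε * γ / nu) ^ 2) * Metric.infDist (x k) F ^ 2
        ≤ ρ * Metric.infDist (x k) F ^ 2 :=
      mul_le_mul_of_nonneg_right hρge (sq_nonneg _)
    nlinarith only [hkey, h7]
  have hgeo : ∀ k, Metric.infDist (x k) F ≤ Real.sqrt ρ ^ k * Metric.infDist (x 0) F := by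
    intro k
    induction k with
    | zero => simp
    | succ n ih =>
      have h1 : Metric.infDist (x (n + 1)) F = Real.sqrt (Metric.infDist (x (n + 1)) F ^ 2) :=
        (Real.sqrt_sq Metric.infDist_nonneg).symm
      rw [h1]
      have h2 : Real.sqrt (Metric.infDist (x (n + 1)) F ^ 2)
          ≤ Real.sqrt (ρ * Metric.infDist (x n) F ^ 2) := Real.sqrt_le_sqrt (hDrec n)
      have h3 : Real.sqrt (ρ * Metric.infDist (x n) F ^ 2)
          = Real.sqrt ρ * Metric.infDist (x n) F := by
        rw [Real.sqrt_mul hρ0, Real.sqrt_sq Metric.infDist_nonneg]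
      have h4 : Real.sqrt ρ * Metric.infDist (x n) F
          ≤ Real.sqrt ρ * (Real.sqrt ρ ^ n * Metric.infDist (x 0) F) :=
        mul_le_mul_of_nonneg_left ih (Real.sqrt_nonneg _)
      refine le_trans (le_trans h2 (le_of_eq h3)) (le_trans h4 (le_of_eq ?_))
      rw [pow_succ]
      ring
  have hsρ1 : Real.sqrt ρ < 1 := by
    have h1 := Real.sqrt_lt_sqrt hρ0 hρ1
    rwa [Real.sqrt_one] at h1
  have hDto : Tendsto (fun k => Metric.infDist (x k) F) atTop (nhds 0) := by
    have hg : Tendsto (fun k => Real.sqrt ρ ^ k * Metric.infDist (x 0) F) atTop (nhds 0) := by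
      have h1 := (tendsto_pow_atTop_nhds_zero_of_lt_one (Real.sqrt_nonneg ρ) hsρ1).mul_const
        (Metric.infDist (x 0) F)
      simpa using h1
    exact squeeze_zero (fun k => Metric.infDist_nonneg) hgeo hg
  have hmono : ∀ w ∈ F, ∀ k m : ℕ, k ≤ m → ‖x m - w‖ ≤ ‖x k - w‖ := by
    intro w hw k m hkm
    induction m, hkm using Nat.le_induction with
    | base => exact le_refl _
    | succ n hn ih =>
      have h1 := stepB w hw n
      have h2 : ‖x (n + 1) - w‖ ^ 2 ≤ ‖x n - w‖ ^ 2 := by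
        have h3 : (0:ℝ) ≤ (ε / nu) ^ 2 * ‖U (T (x n)) - x n‖ ^ 2 := by positivity
        linarith
      exact le_trans (my_le_of_sq_le_sq (norm_nonneg _) (norm_nonneg _) h2) ih
  have hdistD : ∀ N n m : ℕ, N ≤ n → N ≤ m →
      dist (x n) (x m) ≤ 2 * Metric.infDist (x N) F := by
    intro N n m hn hm
    have hb : ∀ w ∈ F, dist (x n) (x m) / 2 ≤ dist (x N) w := by
      intro w hw
      have h1 : dist (x n) (x m) ≤ dist (x n) w + dist w (x m) := dist_triangle _ _ _
      have h2 : dist (x n) w ≤ dist (x N) w := by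
        rw [dist_eq_norm, dist_eq_norm]; exact hmono w hw N n hn
      have h3 : dist w (x m) ≤ dist (x N) w := by
        rw [dist_comm, dist_eq_norm, dist_eq_norm]; exact hmono w hw N m hm
      linarith
    have h4 := my_le_infDist hFne hb
    linarith
  have hcauchy : CauchySeq x :=
    cauchySeq_of_le_tendsto_0 (fun N => 2 * Metric.infDist (x N) F)
      (fun n m N hn hm => hdistD N n m hn hm)
      (by simpa using hDto.const_mul 2)
  obtain ⟨xstar, hxlim⟩ := cauchySeq_tendsto_of_complete hcauchy
  have hxd : ∀ k, ‖x k - xstar‖ ≤ 2 * Metric.infDist (x k) F := by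
    intro k
    have h1 : Tendsto (fun m => dist (x k) (x m)) atTop (nhds (dist (x k) xstar)) :=
      tendsto_const_nhds.dist hxlim
    have h2 : ∀ᶠ m in atTop, dist (x k) (x m) ≤ 2 * Metric.infDist (x k) F :=
      Filter.eventually_atTop.2 ⟨k, fun m hm => hdistD k k m (le_refl _) hm⟩
    have h3 := le_of_tendsto h1 h2
    rwa [dist_eq_norm] at h3
  have hxdist0 : Tendsto (fun k => dist xstar (x k)) atTop (nhds 0) := by
    have h1 : Tendsto (fun k => dist (x k) xstar) atTop (nhds 0) :=
      tendsto_iff_dist_tendsto_zero.1 hxlim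
    simpa [dist_comm] using h1
  have hxFinf : Metric.infDist xstar F ≤ 0 := by
    have h1 : ∀ k, Metric.infDist xstar F ≤ Metric.infDist (x k) F + dist xstar (x k) :=
      fun k => Metric.infDist_le_infDist_add_dist
    have h2 : Tendsto (fun k => Metric.infDist (x k) F + dist xstar (x k)) atTop (nhds 0) := by
      simpa using hDto.add hxdist0
    exact ge_of_tendsto h2 (Filter.Eventually.of_forall h1)
  have happrox : ∀ η : ℝ, 0 < η → ∃ w, w ∈ F ∧ ‖w - xstar‖ < η := by
    intro η hη
    have h1 : Metric.infDist xstar F < η := lt_of_le_of_lt hxFinf hη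
    obtain ⟨w, hwF, hwd⟩ := (Metric.infDist_lt_iff hFne).1 h1
    refine ⟨w, hwF, ?_⟩
    rw [← dist_eq_norm, dist_comm]
    exact hwd
  have hTstar : T xstar = xstar :=
    my_fix_of_approx hlam hTc fun η hη => by
      obtain ⟨w, hwF, hwd⟩ := happrox η hη
      exact ⟨w, hwF.1, hwd⟩
  have hUstar : U xstar = xstar :=
    my_fix_of_approx hmu hUc fun η hη => by
      obtain ⟨w, hwF, hwd⟩ := happrox η hη
      exact ⟨w, hwF.2, hwd⟩
  refine ⟨xstar, hTstar, hUstar, hxlim, ?_⟩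
  intro k
  have hxstarF : xstar ∈ F := ⟨hTstar, hUstar⟩
  have h1 := stepC δ hδ0 hregδ xstar hxstarF k
  have h2 := hxd k
  have h3 : (ε * δ / (2 * nu)) ^ 2 * ‖x k - xstar‖ ^ 2
      ≤ (ε * δ / nu) ^ 2 * Metric.infDist (x k) F ^ 2 := by
    have h4 : ‖x k - xstar‖ ^ 2 ≤ (2 * Metric.infDist (x k) F) ^ 2 :=
      pow_le_pow_left₀ (norm_nonneg _) h2 2
    calc (ε * δ / (2 * nu)) ^ 2 * ‖x k - xstar‖ ^ 2
        ≤ (ε * δ / (2 * nu)) ^ 2 * (2 * Metric.infDist (x k) F) ^ 2 :=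
          mul_le_mul_of_nonneg_left h4 (by positivity)
      _ = (ε * δ / nu) ^ 2 * Metric.infDist (x k) F ^ 2 := by
          field_simp
  have h5 : ‖x (k + 1) - xstar‖ ^ 2 ≤ (1 - (ε * δ / (2 * nu)) ^ 2) * ‖x k - xstar‖ ^ 2 := by
    nlinarith only [h1, h3]
  exact my_sq_le (norm_nonneg _) (norm_nonneg _) h5
end
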